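/- arXiv:math/9912250 — 8 statements merged into one kernel-verified Lean document; each statement's English description precedes it below -/
import Mathlib

section
/- Let a, b be nonzero rational numbers that are multiplicatively independent (i.e., a^x * b^y = 1 with integers x, y implies x = y = 0). Then the set of primes p for which (b mod p) lies in the subgroup of (Z/pZ)* generated by (a mod p) is infinite. (Here only primes not dividing the numerators or denominators of a and b are considered.) -/
/-!
Write `a = c / d`, `b = e / f` in lowest terms and `A n = c ^ n * f - e * d ^ n`. A prime
`p ∤ c d e f` dividing some `A n` has `(a mod p) ^ n = b mod p`, so it suffices that infinitely many
primes `p ∤ c d` divide terms of `A`. If only finitely many did, let `M` be a high power of their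
product. By Euler's theorem, `A (n₀ + j φ(M)) ≡ A n₀ [ZMOD M]`, so these primes divide
`A (n₀ + j φ(M))` no more often than `A n₀`, while for large `n` the primes of `c` (resp. `d`)
divide `A n` no more often than `e` (resp. `f`). Hence `A (n₀ + j φ(M)) ∣ e f A n₀` for all `j`,
contradicting `|A n| → ∞`, which holds because `|a| ≠ 1`.
-/

open Filter Topology Finset

theorem Int.pow_add_mul_totient_modEq {M : ℕ} {c : ℤ} (hc : IsCoprime (M : ℤ) c) (n j : ℕ) :
    c ^ (n + j * M.totient) ≡ c ^ n [ZMOD M] := by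
  obtain ⟨u, hu⟩ := (ZMod.coe_int_isUnit_iff_isCoprime c M).2 hc
  rw [← ZMod.intCast_eq_intCast_iff]
  push_cast
  rw [← hu, pow_add, pow_mul', ← Units.val_pow_eq_pow_val u M.totient, ZMod.pow_totient]
  simp

theorem pow_mul_sub_mul_pow_add_mul_totient_modEq {M : ℕ} {c d : ℤ} (hc : IsCoprime (M : ℤ) c)
    (hd : IsCoprime (M : ℤ) d) (e f : ℤ) (n j : ℕ) :
    c ^ (n + j * M.totient) * f - e * d ^ (n + j * M.totient) ≡ c ^ n * f - e * d ^ n [ZMOD M] :=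
  ((Int.pow_add_mul_totient_modEq hc n j).mul_right f).sub
    ((Int.pow_add_mul_totient_modEq hd n j).mul_left e)

theorem isCoprime_prod_pow_of_forall_not_dvd {S : Finset ℕ} {x : ℤ} (s : ℕ)
    (hS : ∀ p ∈ S, p.Prime ∧ ¬ (p : ℤ) ∣ x) : IsCoprime (((∏ p ∈ S, p) ^ s : ℕ) : ℤ) x := by
  rw [Nat.cast_pow, Nat.cast_prod]
  exact IsCoprime.pow_left (IsCoprime.prod_left fun p hp =>
    (Nat.prime_iff_prime_int.mp (hS p hp).1).coprime_iff_not_dvd.2 (hS p hp).2)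

theorem Int.pow_dvd_of_pow_min_dvd {p k s : ℕ} {x : ℤ} (hp : 1 < p) (hx : x ≠ 0)
    (hs : x.natAbs ≤ s) (h : (p : ℤ) ^ min k s ∣ x) : (p : ℤ) ^ k ∣ x := by
  rcases le_total k s with hks | hsk
  · rwa [min_eq_left hks] at h
  · rw [min_eq_right hsk] at h
    have := Int.natAbs_le_of_dvd_ne_zero h hx
    rw [Int.natAbs_pow, Int.natAbs_natCast] at this
    exact absurd (Nat.lt_pow_self hp (n := s)) (by omega)

theorem Int.pow_dvd_of_pow_dvd_of_modEq {p k s : ℕ} {x y M : ℤ} (hp : 1 < p) (hy : y ≠ 0)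
    (hs : y.natAbs ≤ s) (hM : (p : ℤ) ^ s ∣ M) (hxy : x ≡ y [ZMOD M]) (h : (p : ℤ) ^ k ∣ x) :
    (p : ℤ) ^ k ∣ y := by
  refine Int.pow_dvd_of_pow_min_dvd hp hy hs ?_
  have h₁ := (pow_dvd_pow _ (min_le_right k s)).trans (hM.trans hxy.dvd)
  have h₂ := (pow_dvd_pow _ (min_le_left k s)).trans h
  simpa using dvd_add h₁ h₂

theorem pow_dvd_of_pow_dvd_pow_mul_sub_mul_pow {p k n : ℕ} {c d e f : ℤ} (hp : 1 < p)
    (hpc : (p : ℤ) ∣ c) (hpd : IsCoprime (p : ℤ) d) (he : e ≠ 0) (hn : e.natAbs ≤ n)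
    (h : (p : ℤ) ^ k ∣ c ^ n * f - e * d ^ n) : (p : ℤ) ^ k ∣ e := by
  refine Int.pow_dvd_of_pow_min_dvd hp he hn ?_
  have hc : (p : ℤ) ^ min k n ∣ c ^ n * f :=
    dvd_mul_of_dvd_left ((pow_dvd_pow_of_dvd hpc _).trans (pow_dvd_pow c (min_le_right k n))) f
  have hed : (p : ℤ) ^ min k n ∣ e * d ^ n := by
    simpa using dvd_sub hc ((pow_dvd_pow _ (min_le_left k n)).trans h)
  exact (hpd.pow (m := min k n) (n := n)).dvd_of_dvd_mul_right hed

theorem pow_dvd_mul_of_pow_dvd_pow_mul_sub_mul_pow {p k n : ℕ} {c d e f : ℤ} (hp : 1 < p)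
    (hcd : IsCoprime c d) (hpcd : (p : ℤ) ∣ c ∨ (p : ℤ) ∣ d) (he : e ≠ 0) (hf : f ≠ 0)
    (hn : e.natAbs + f.natAbs ≤ n) (h : (p : ℤ) ^ k ∣ c ^ n * f - e * d ^ n) :
    (p : ℤ) ^ k ∣ e * f := by
  rcases hpcd with hpc | hpd
  · exact dvd_mul_of_dvd_left (pow_dvd_of_pow_dvd_pow_mul_sub_mul_pow hp hpc
      (hcd.of_isCoprime_of_dvd_left hpc) he (by omega) h) f
  · have h' : (p : ℤ) ^ k ∣ d ^ n * e - f * c ^ n := by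
      rw [show d ^ n * e - f * c ^ n = -(c ^ n * f - e * d ^ n) by ring]
      exact dvd_neg.2 h
    exact dvd_mul_of_dvd_right (pow_dvd_of_pow_dvd_pow_mul_sub_mul_pow hp hpd
      (hcd.symm.of_isCoprime_of_dvd_left hpd) hf (by omega) h') e

theorem tendsto_pow_mul_sub_mul_pow_atTop {u v F : ℝ} (hv : 0 ≤ v) (hvu : v < u) (hu : 1 < u)
    (hF : 0 < F) (K : ℝ) : Tendsto (fun n : ℕ => u ^ n * F - K * v ^ n) atTop atTop := by
  have hratio : Tendsto (fun n : ℕ => F - K * (v / u) ^ n) atTop (𝓝 F) := by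
    simpa using tendsto_const_nhds.sub ((tendsto_pow_atTop_nhds_zero_of_lt_one
      (div_nonneg hv (by linarith)) ((div_lt_one (by linarith)).2 hvu)).const_mul K)
  refine ((tendsto_pow_atTop_atTop_of_one_lt hu).atTop_mul_pos hF hratio).congr fun n => ?_
  have : u ^ n ≠ 0 := pow_ne_zero n (by linarith)
  rw [div_pow]
  field_simp

theorem tendsto_abs_pow_mul_sub_mul_pow_of_abs_lt {c d e f : ℤ} (hd : d ≠ 0) (hdc : |d| < |c|)
    (hf : f ≠ 0) : Tendsto (fun n : ℕ => |c ^ n * f - e * d ^ n|) atTop atTop := by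
  have hc : (1 : ℝ) < |c| := by
    have := Int.one_le_abs hd
    exact_mod_cast (by omega : 1 < |c|)
  have hlower := tendsto_pow_mul_sub_mul_pow_atTop (abs_nonneg (d : ℝ))
    (by exact_mod_cast hdc) hc (by positivity) |(e : ℝ)| (F := |(f : ℝ)|)
  have hlower' : Tendsto (fun n : ℕ => |c| ^ n * |f| - |e| * |d| ^ n) atTop atTop := by
    rw [← tendsto_intCast_atTop_iff (R := ℝ)]
    simpa using hlower
  refine tendsto_atTop_mono (fun n => ?_) hlower'
  simpa [abs_mul, abs_pow] using abs_sub_abs_le_abs_sub (c ^ n * f) (e * d ^ n)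

theorem tendsto_abs_pow_mul_sub_mul_pow {c d e f : ℤ} (hc : c ≠ 0) (hd : d ≠ 0) (he : e ≠ 0)
    (hf : f ≠ 0) (habs : |c| ≠ |d|) :
    Tendsto (fun n : ℕ => |c ^ n * f - e * d ^ n|) atTop atTop := by
  rcases habs.lt_or_gt with hlt | hgt
  · refine (tendsto_abs_pow_mul_sub_mul_pow_of_abs_lt hc hlt he (e := f)).congr fun n => ?_
    rw [abs_sub_comm, mul_comm f, mul_comm (d ^ n)]
  · exact tendsto_abs_pow_mul_sub_mul_pow_of_abs_lt hd hgt hf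

theorem ZMod.mul_inv_pow_eq_of_dvd_pow_mul_sub {p n : ℕ} [Fact p.Prime] {c d e f : ℤ}
    (hd : ¬ (p : ℤ) ∣ d) (hf : ¬ (p : ℤ) ∣ f) (h : (p : ℤ) ∣ c ^ n * f - e * d ^ n) :
    ((c : ZMod p) * (d : ZMod p)⁻¹) ^ n = (e : ZMod p) * (f : ZMod p)⁻¹ := by
  rw [← ZMod.intCast_zmod_eq_zero_iff_dvd] at hd hf h
  push_cast at h
  rw [mul_pow, inv_pow, ← div_eq_mul_inv, ← div_eq_mul_inv, div_eq_div_iff (pow_ne_zero _ hd) hf]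
  linear_combination h

theorem infinite_setOf_prime_dvd_pow_mul_sub_mul_pow {c d e f : ℤ} (hc : c ≠ 0) (hd : d ≠ 0)
    (he : e ≠ 0) (hf : f ≠ 0) (hcd : IsCoprime c d) (habs : |c| ≠ |d|) :
    {p : ℕ | p.Prime ∧ ¬ (p : ℤ) ∣ c * d ∧ ∃ n : ℕ, (p : ℤ) ∣ c ^ n * f - e * d ^ n}.Infinite := by
  set A : ℕ → ℤ := fun n => c ^ n * f - e * d ^ n
  intro hfin
  have hgrowth := tendsto_abs_pow_mul_sub_mul_pow hc hd he hf habs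
  obtain ⟨n₀, hn₀⟩ := (hgrowth.eventually_gt_atTop 0).exists
  have hA₀ : A n₀ ≠ 0 := abs_pos.1 hn₀
  set S := hfin.toFinset
  -- `p ^ s > |A n₀|` for every prime `p`, so congruence modulo `p ^ s` sees the `p`-part of `A n₀`.
  set s := (A n₀).natAbs
  set M : ℕ := (∏ p ∈ S, p) ^ s
  have hMcd : IsCoprime (M : ℤ) (c * d) := isCoprime_prod_pow_of_forall_not_dvd s fun p hp =>
    ⟨(hfin.mem_toFinset.1 hp).1, (hfin.mem_toFinset.1 hp).2.1⟩
  have hφ : 0 < M.totient :=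
    Nat.totient_pos.2 (pow_pos (prod_pos fun p hp => (hfin.mem_toFinset.1 hp).1.pos) s)
  have hprog : Tendsto (fun j : ℕ => n₀ + j * M.totient) atTop atTop :=
    tendsto_atTop_mono (fun j => (Nat.le_mul_of_pos_right j hφ).trans (Nat.le_add_left _ _))
      tendsto_id
  obtain ⟨j, hjn, hjA⟩ := ((hprog.eventually_ge_atTop (e.natAbs + f.natAbs)).and
    ((hgrowth.comp hprog).eventually_gt_atTop |e * f * A n₀|)).exists
  set n := n₀ + j * M.totient
  have hper : A n ≡ A n₀ [ZMOD M] := pow_mul_sub_mul_pow_add_mul_totient_modEq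
    hMcd.of_mul_right_left hMcd.of_mul_right_right e f n₀ j
  have hdvd : A n ∣ e * f * A n₀ := by
    rw [← Int.natAbs_dvd_natAbs, Nat.dvd_iff_prime_pow_dvd_dvd]
    intro p k hp hpk
    rw [← Int.natCast_dvd, Nat.cast_pow] at hpk ⊢
    by_cases hpcd : (p : ℤ) ∣ c ∨ (p : ℤ) ∣ d
    · exact dvd_mul_of_dvd_left
        (pow_dvd_mul_of_pow_dvd_pow_mul_sub_mul_pow hp.one_lt hcd hpcd he hf hjn hpk) _
    rcases Nat.eq_zero_or_pos k with rfl | hk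
    · simp
    have hpS : p ∈ S := hfin.mem_toFinset.2 ⟨hp, fun h => hpcd
      ((Nat.prime_iff_prime_int.mp hp).dvd_mul.1 h), n, (dvd_pow_self _ hk.ne').trans hpk⟩
    have hpM : (p : ℤ) ^ s ∣ M := by
      rw [Nat.cast_pow]
      exact pow_dvd_pow_of_dvd (Int.natCast_dvd_natCast.2 (dvd_prod_of_mem _ hpS)) s
    exact dvd_mul_of_dvd_right
      (Int.pow_dvd_of_pow_dvd_of_modEq hp.one_lt hA₀ le_rfl hpM hper hpk) _
  have hlt : |e * f * A n₀| < |A n| := hjA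
  exact hlt.not_ge (Int.le_abs_of_dvd (by positivity) ((abs_dvd _ _).2 hdvd))

/-- Two-variable Artin conjecture, unconditional part (Theorem 1):
for multiplicatively independent nonzero rationals `a, b`, the set of primes `p`
(not dividing numerators/denominators of `a`, `b`) such that `b mod p` lies in the
subgroup of `(ℤ/pℤ)ˣ` generated by `a mod p` is infinite. -/
theorem two_variable_artin_infinite
    (a b : ℚ) (ha : a ≠ 0) (hb : b ≠ 0)
    (hindep : ∀ x y : ℤ, a ^ x * b ^ y = 1 → x = 0 ∧ y = 0) :
    {p : ℕ | p.Prime ∧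
      ¬ (p : ℤ) ∣ a.num ∧ ¬ (p : ℤ) ∣ (a.den : ℤ) ∧
      ¬ (p : ℤ) ∣ b.num ∧ ¬ (p : ℤ) ∣ (b.den : ℤ) ∧
      ∃ n : ℕ,
        ((a.num : ZMod p) * ((a.den : ZMod p))⁻¹) ^ n
          = (b.num : ZMod p) * ((b.den : ZMod p))⁻¹}.Infinite := by
  have habs : |a.num| ≠ |(a.den : ℤ)| := by
    intro h
    have hsq : (a.num : ℚ) ^ 2 = (a.den : ℚ) ^ 2 := by
      exact_mod_cast (sq_eq_sq_iff_abs_eq_abs _ _).2 h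
    have hsq_one : a ^ (2 : ℤ) * b ^ (0 : ℤ) = 1 := by
      rw [← Rat.num_div_den a, zpow_ofNat, div_pow, hsq, div_self (by positivity)]
      simp
    exact absurd (hindep 2 0 hsq_one).1 two_ne_zero
  have hprimes := infinite_setOf_prime_dvd_pow_mul_sub_mul_pow (d := a.den) (f := b.den)
    (Rat.num_ne_zero.2 ha) (by simp) (Rat.num_ne_zero.2 hb) (by simp)
    (Rat.isCoprime_num_den a) habs
  have hfin : {p : ℕ | (p : ℤ) ∣ b.num * b.den}.Finite :=
    (Nat.divisors (b.num * b.den).natAbs).finite_toSet.subset fun p hp =>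
      Nat.mem_divisors.2 ⟨Int.natCast_dvd.1 hp, by simp [Rat.num_ne_zero.2 hb, b.den_nz]⟩
  refine (hprimes.sdiff hfin).mono ?_
  rintro p ⟨⟨hp, hpcd, n, hpn⟩, hpef : ¬ (p : ℤ) ∣ b.num * b.den⟩
  have := Fact.mk hp
  have hpd : ¬ (p : ℤ) ∣ a.den := fun h => hpcd (dvd_mul_of_dvd_right h _)
  have hpf : ¬ (p : ℤ) ∣ b.den := fun h => hpef (dvd_mul_of_dvd_right h _)
  refine ⟨hp, fun h => hpcd (dvd_mul_of_dvd_left h _), hpd,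
    fun h => hpef (dvd_mul_of_dvd_left h _), hpf, n, ?_⟩
  simpa using ZMod.mul_inv_pow_eq_of_dvd_pow_mul_sub hpd hpf hpn
end

section
/- Let a1, a2, b1, b2 be nonzero integers with a1 ≠ ± a2, gcd(a1,a2) = 1, gcd(b1,b2) = 1, and suppose a1/a2 and b1/b2 are multiplicatively independent in Q*. Then the set of primes dividing some term of the sequence x_n = b2 * a1^n - b1 * a2^n (n ≥ 0) is infinite. -/
/-!
Suppose only the primes of a finite set `S` divide terms of `x n = b₂ a₁ⁿ - b₁ a₂ⁿ`. Since
`|a₁| ≠ |a₂|`, `|x n|` grows exponentially. On the other hand, for each prime `p` the power of `p`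
dividing two terms `x n` and `x (n + k)` is `O(k)`: if `p` divides `a₁` (or `a₂`), then for
large `n` this power divides `b₁` (or `b₂`), and otherwise it divides `a₁ᵏ - a₂ᵏ`, whose `p`-adic
valuation is `O(1) + v_p(k)` by lifting the exponent. Hence among the terms `x n` with
`N ≤ n < 2N`, at most one has `p`-part larger than `K_p N`, so for `N > #S` some term has
`|x n| ≤ ∏ K_p N = O(N^#S)`, which contradicts the exponential growth.
-/

open Filter Finset

theorem eventually_mul_le_of_isLittleO {α : Type*} {l : Filter α} {f g : α → ℕ}
    (h : (fun a => (f a : ℝ)) =o[l] fun a => (g a : ℝ)) (c : ℕ) :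
    ∀ᶠ a in l, c * f a ≤ g a := by
  filter_upwards [(h.const_mul_left (c : ℝ)).eventuallyLE] with a ha
  simpa only [norm_mul, Real.norm_natCast, ← Nat.cast_mul, Nat.cast_le] using ha

/-- The exponent `e = 2 (p - 1)` gives `xᵉ ≡ yᵉ` modulo `p` by Fermat, and modulo `4` when
`p = 2`, which is what the lifting-the-exponent lemma needs. -/
theorem emultiplicity_pow_sub_pow_le {p : ℕ} (hp : p.Prime) {x y : ℤ} (hx : ¬(p : ℤ) ∣ x)
    (hy : ¬(p : ℤ) ∣ y) (k : ℕ) :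
    emultiplicity (p : ℤ) (x ^ k - y ^ k) ≤
      emultiplicity (p : ℤ) (x ^ (2 * (p - 1)) - y ^ (2 * (p - 1))) + emultiplicity (p : ℤ) k := by
  set e := 2 * (p - 1)
  have hdvd : x ^ k - y ^ k ∣ (x ^ e) ^ k - (y ^ e) ^ k := by
    simpa only [← pow_mul, mul_comm e k] using sub_dvd_pow_sub_pow (x ^ k) (y ^ k) e
  refine (emultiplicity_le_emultiplicity_of_dvd_right hdvd).trans_eq ?_
  have hxe : ¬(p : ℤ) ∣ x ^ e := fun h => hx ((Nat.prime_iff_prime_int.mp hp).dvd_of_dvd_pow h)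
  rcases hp.eq_two_or_odd' with rfl | hodd
  · have hsq : ∀ z : ℤ, ¬(2 : ℤ) ∣ z → z ^ 2 ≡ 1 [ZMOD 4] := fun z hz =>
      Int.sq_mod_four_eq_one_of_odd (Int.not_even_iff_odd.mp (even_iff_two_dvd.not.mpr hz))
    push_cast at hx hy hxe ⊢
    exact Int.two_pow_sub_pow' k ((hsq y hy).trans (hsq x hx).symm).dvd hxe
  · have hfermat : ∀ z : ℤ, ¬(p : ℤ) ∣ z → z ^ e ≡ 1 [ZMOD p] := fun z hz => by
      have hcop := ((Nat.prime_iff_prime_int.mp hp).coprime_iff_not_dvd.mpr hz).symm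
      simpa only [e, pow_mul', one_pow] using (Int.ModEq.pow_card_sub_one_eq_one hp hcop).pow 2
    rw [Int.emultiplicity_pow_sub_pow hp hodd ((hfermat y hy).trans (hfermat x hx).symm).dvd hxe,
      Int.natCast_emultiplicity]

theorem exists_pow_le_mul_of_pow_dvd_pow_sub_pow {p : ℕ} (hp : p.Prime) {x y : ℤ}
    (hx : ¬(p : ℤ) ∣ x) (hy : ¬(p : ℤ) ∣ y) (hxy : x.natAbs ≠ y.natAbs) :
    ∃ K : ℕ, ∀ m k : ℕ, 0 < k → (p : ℤ) ^ m ∣ x ^ k - y ^ k → p ^ m ≤ K * k := by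
  set D := x ^ (2 * (p - 1)) - y ^ (2 * (p - 1))
  have hD : D ≠ 0 := by
    refine sub_ne_zero.mpr fun h => hxy (Nat.pow_left_injective (n := 2 * (p - 1)) ?_ ?_)
    · have := hp.two_le
      omega
    · simpa only [Int.natAbs_pow] using congrArg Int.natAbs h
  have hDfin : FiniteMultiplicity (p : ℤ) D :=
    Int.finiteMultiplicity_iff.mpr ⟨by simpa using hp.ne_one, hD⟩
  refine ⟨p ^ multiplicity (p : ℤ) D, fun m k hk hdvd => ?_⟩
  have hkfin : FiniteMultiplicity p k := Nat.finiteMultiplicity_iff.mpr ⟨hp.ne_one, hk⟩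
  have hm : m ≤ multiplicity (p : ℤ) D + multiplicity p k := by
    have := (le_emultiplicity_of_pow_dvd hdvd).trans (emultiplicity_pow_sub_pow_le hp hx hy k)
    rwa [Int.natCast_emultiplicity, hDfin.emultiplicity_eq_multiplicity,
      hkfin.emultiplicity_eq_multiplicity, ← Nat.cast_add, Nat.cast_le] at this
  calc p ^ m ≤ p ^ (multiplicity (p : ℤ) D + multiplicity p k) := Nat.pow_le_pow_right hp.pos hm
    _ = p ^ multiplicity (p : ℤ) D * p ^ multiplicity p k := pow_add ..
    _ ≤ p ^ multiplicity (p : ℤ) D * k :=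
      Nat.mul_le_mul_left _ (Nat.le_of_dvd hk (pow_multiplicity_dvd p k))

theorem dvd_pow_sub_pow_of_dvd_of_dvd {z a1 a2 b1 b2 : ℤ} (ha1 : IsCoprime z a1)
    (ha2 : IsCoprime z a2) (hb : IsCoprime b1 b2) {n k : ℕ}
    (h : z ∣ b2 * a1 ^ n - b1 * a2 ^ n) (h' : z ∣ b2 * a1 ^ (n + k) - b1 * a2 ^ (n + k)) :
    z ∣ a1 ^ k - a2 ^ k := by
  have h1 : z ∣ b1 * (a1 ^ k - a2 ^ k) * a2 ^ n := by
    have e : b1 * (a1 ^ k - a2 ^ k) * a2 ^ n =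
        (b2 * a1 ^ (n + k) - b1 * a2 ^ (n + k)) - a1 ^ k * (b2 * a1 ^ n - b1 * a2 ^ n) := by ring
    exact e ▸ dvd_sub h' (dvd_mul_of_dvd_right h _)
  have h2 : z ∣ b2 * (a1 ^ k - a2 ^ k) * a1 ^ n := by
    have e : b2 * (a1 ^ k - a2 ^ k) * a1 ^ n =
        (b2 * a1 ^ (n + k) - b1 * a2 ^ (n + k)) - a2 ^ k * (b2 * a1 ^ n - b1 * a2 ^ n) := by ring
    exact e ▸ dvd_sub h' (dvd_mul_of_dvd_right h _)
  obtain ⟨u, v, huv⟩ := hb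
  have e : a1 ^ k - a2 ^ k = u * (b1 * (a1 ^ k - a2 ^ k)) + v * (b2 * (a1 ^ k - a2 ^ k)) := by
    linear_combination (a1 ^ k - a2 ^ k) * huv.symm
  rw [e]
  exact dvd_add (dvd_mul_of_dvd_right (ha2.pow_right.dvd_of_dvd_mul_right h1) _)
    (dvd_mul_of_dvd_right (ha1.pow_right.dvd_of_dvd_mul_right h2) _)

theorem pow_le_natAbs_of_pow_dvd_mul_pow_sub {p : ℕ} (hp : p.Prime) {a b c d : ℤ} {m n : ℕ}
    (hpa : (p : ℤ) ∣ a) (hpc : ¬(p : ℤ) ∣ c) (hd : d ≠ 0) (hn : d.natAbs ≤ n)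
    (h : (p : ℤ) ^ m ∣ b * a ^ n - d * c ^ n) : p ^ m ≤ d.natAbs := by
  have hdc : (p : ℤ) ^ min m n ∣ d * c ^ n := by
    have hba : (p : ℤ) ^ min m n ∣ b * a ^ n :=
      dvd_mul_of_dvd_right ((pow_dvd_pow _ (min_le_right m n)).trans (pow_dvd_pow_of_dvd hpa n)) b
    simpa only [sub_sub_cancel] using dvd_sub hba ((pow_dvd_pow _ (min_le_left m n)).trans h)
  have hcop : IsCoprime (p : ℤ) c := (Nat.prime_iff_prime_int.mp hp).coprime_iff_not_dvd.mpr hpc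
  have hle : p ^ min m n ≤ d.natAbs := Nat.le_of_dvd (Int.natAbs_pos.mpr hd)
    (Int.natCast_dvd.mp (by exact_mod_cast hcop.pow.dvd_of_dvd_mul_right hdc))
  rcases le_total m n with hmn | hnm
  · rwa [min_eq_left hmn] at hle
  · rw [min_eq_right hnm] at hle
    exact absurd (hle.trans hn) (not_le.mpr (Nat.lt_pow_self hp.one_lt))

theorem exists_pow_le_mul_of_pow_dvd_of_pow_dvd {a1 a2 b1 b2 : ℤ} (hb1 : b1 ≠ 0) (hb2 : b2 ≠ 0)
    (habs : a1.natAbs ≠ a2.natAbs) (hcop_a : IsCoprime a1 a2) (hcop_b : IsCoprime b1 b2)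
    {p : ℕ} (hp : p.Prime) :
    ∃ K C : ℕ, ∀ m n k : ℕ, C ≤ n → 0 < k → (p : ℤ) ^ m ∣ b2 * a1 ^ n - b1 * a2 ^ n →
      (p : ℤ) ^ m ∣ b2 * a1 ^ (n + k) - b1 * a2 ^ (n + k) → p ^ m ≤ K * k := by
  have hp' : Prime (p : ℤ) := Nat.prime_iff_prime_int.mp hp
  by_cases hpa1 : (p : ℤ) ∣ a1
  · have hpa2 : ¬(p : ℤ) ∣ a2 := fun hpa2 => hp'.not_isUnit (hcop_a.isUnit_of_dvd' hpa1 hpa2)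
    refine ⟨b1.natAbs, b1.natAbs, fun m n k hn hk h _ => ?_⟩
    exact (pow_le_natAbs_of_pow_dvd_mul_pow_sub hp hpa1 hpa2 hb1 hn h).trans
      (Nat.le_mul_of_pos_right _ hk)
  by_cases hpa2 : (p : ℤ) ∣ a2
  · refine ⟨b2.natAbs, b2.natAbs, fun m n k hn hk h _ => ?_⟩
    exact (pow_le_natAbs_of_pow_dvd_mul_pow_sub hp hpa2 hpa1 hb2 hn (dvd_sub_comm.mp h)).trans
      (Nat.le_mul_of_pos_right _ hk)
  obtain ⟨K, hK⟩ := exists_pow_le_mul_of_pow_dvd_pow_sub_pow hp hpa1 hpa2 habs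
  have hcop : ∀ {z : ℤ}, ¬(p : ℤ) ∣ z → IsCoprime (p : ℤ) z := hp'.coprime_iff_not_dvd.mpr
  exact ⟨K, 0, fun m n k _ hk h h' => hK m k hk
    (dvd_pow_sub_pow_of_dvd_of_dvd (hcop hpa1).pow_left (hcop hpa2).pow_left hcop_b h h')⟩

theorem eventually_two_pow_le_two_mul_natAbs {a1 a2 b1 b2 : ℤ} (ha1 : a1 ≠ 0) (ha2 : a2 ≠ 0)
    (hb1 : b1 ≠ 0) (hb2 : b2 ≠ 0) (habs : a1.natAbs ≠ a2.natAbs) :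
    ∀ᶠ n in atTop, 2 ^ n ≤ 2 * (b2 * a1 ^ n - b1 * a2 ^ n).natAbs := by
  wlog hlt : a2.natAbs < a1.natAbs generalizing a1 a2 b1 b2
  · filter_upwards [this ha2 ha1 hb2 hb1 habs.symm (by omega)] with n hn
    rwa [← Int.natAbs_neg, neg_sub]
  have hlo : (fun n => ((a2.natAbs ^ n : ℕ) : ℝ)) =o[atTop] fun n => ((a1.natAbs ^ n : ℕ) : ℝ) := by
    push_cast
    exact isLittleO_pow_pow_of_lt_left (Nat.cast_nonneg _) (Nat.cast_lt.mpr hlt)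
  filter_upwards [eventually_mul_le_of_isLittleO hlo (2 * b1.natAbs)] with n hn
  have hlead : a1.natAbs ^ n ≤ (b2 * a1 ^ n).natAbs := by
    rw [Int.natAbs_mul, Int.natAbs_pow]
    exact Nat.le_mul_of_pos_left _ (Int.natAbs_pos.mpr hb2)
  have htri := Int.natAbs_add_le (b2 * a1 ^ n - b1 * a2 ^ n) (b1 * a2 ^ n)
  rw [sub_add_cancel, Int.natAbs_mul b1, Int.natAbs_pow] at htri
  have h2 : 2 ^ n ≤ a1.natAbs ^ n :=
    Nat.pow_le_pow_left (by have := Int.natAbs_pos.mpr ha2; omega) n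
  nlinarith

section Window

variable {f : ℕ → ℤ}

theorem card_filter_lt_ordProj_le_one {p K C N : ℕ}
    (hsep : ∀ m n k, C ≤ n → 0 < k → (p : ℤ) ^ m ∣ f n → (p : ℤ) ^ m ∣ f (n + k) → p ^ m ≤ K * k)
    (hN : C ≤ N) :
    #{n ∈ Ico N (2 * N) | K * N < ordProj[p] (f n).natAbs} ≤ 1 := by
  have key : ∀ n n', n < n' → n ∈ Ico N (2 * N) → n' ∈ Ico N (2 * N) →
      K * N < ordProj[p] (f n).natAbs → K * N < ordProj[p] (f n').natAbs → False := by
    intro n n' hlt hn hn' h h'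
    rw [mem_Ico] at hn hn'
    obtain ⟨k, rfl⟩ := Nat.exists_eq_add_of_lt hlt
    have hdvd : ∀ i j, j ≤ (f i).natAbs.factorization p → (p : ℤ) ^ j ∣ f i := fun i j hj => by
      exact_mod_cast Int.natCast_dvd.mpr ((pow_dvd_pow p hj).trans (Nat.ordProj_dvd _ p))
    have hmin : K * N < p ^ min ((f n).natAbs.factorization p)
        ((f (n + k + 1)).natAbs.factorization p) := by
      rcases min_choice ((f n).natAbs.factorization p) ((f (n + k + 1)).natAbs.factorization p)
        with hm | hm <;> rwa [hm]
    have := hsep _ n (k + 1) (by omega) k.succ_pos (hdvd n _ (min_le_left _ _))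
      (hdvd (n + k + 1) _ (min_le_right _ _))
    have := Nat.mul_le_mul_left K (show k + 1 ≤ N by omega)
    omega
  refine card_le_one.mpr fun n hn n' hn' => ?_
  rw [mem_filter] at hn hn'
  by_contra hne
  rcases Nat.lt_or_gt_of_ne hne with h | h
  · exact key n n' h hn.1 hn'.1 hn.2 hn'.2
  · exact key n' n h hn'.1 hn.1 hn'.2 hn.2

theorem exists_mem_Ico_forall_ordProj_le {S : Finset ℕ} {K C : ℕ → ℕ} {N : ℕ}
    (hsep : ∀ p ∈ S, ∀ m n k, C p ≤ n → 0 < k → (p : ℤ) ^ m ∣ f n → (p : ℤ) ^ m ∣ f (n + k) →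
      p ^ m ≤ K p * k)
    (hC : ∀ p ∈ S, C p ≤ N) (hS : #S < N) :
    ∃ n ∈ Ico N (2 * N), ∀ p ∈ S, ordProj[p] (f n).natAbs ≤ K p * N := by
  by_contra! h
  have hcover : Ico N (2 * N) ⊆
      S.biUnion fun p => {n ∈ Ico N (2 * N) | K p * N < ordProj[p] (f n).natAbs} := by
    intro n hn
    obtain ⟨p, hp, hlt⟩ := h n hn
    exact mem_biUnion.mpr ⟨p, hp, mem_filter.mpr ⟨hn, hlt⟩⟩
  have := (card_le_card hcover).trans (card_biUnion_le_card_mul _ _ 1 fun p hp =>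
    card_filter_lt_ordProj_le_one (hsep p hp) (hC p hp))
  rw [Nat.card_Ico] at this
  omega

end Window

theorem Nat.eq_prod_ordProj_of_primeFactors_subset {n : ℕ} {S : Finset ℕ} (hn : n ≠ 0)
    (hS : n.primeFactors ⊆ S) : n = ∏ p ∈ S, ordProj[p] n := by
  conv_lhs => rw [← Nat.prod_factorization_pow_eq_self hn]
  exact Finsupp.prod_of_support_subset _ (by rwa [Nat.support_factorization]) _
    fun _ _ => pow_zero _

theorem infinite_setOf_prime_dvd_of_growth {f : ℕ → ℤ}
    (hgrowth : ∀ᶠ n in atTop, 2 ^ n ≤ 2 * (f n).natAbs)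
    (hsep : ∀ p : ℕ, p.Prime → ∃ K C : ℕ, ∀ m n k, C ≤ n → 0 < k → (p : ℤ) ^ m ∣ f n →
      (p : ℤ) ^ m ∣ f (n + k) → p ^ m ≤ K * k) :
    {p : ℕ | p.Prime ∧ ∃ n, (p : ℤ) ∣ f n}.Infinite := by
  intro hfin
  set S := hfin.toFinset
  choose! K C hKC using fun p (hp : p ∈ S) => hsep p (hfin.mem_toFinset.mp hp).1
  obtain ⟨N₀, hN₀⟩ := eventually_atTop.mp hgrowth
  have hpoly : (fun N => ((N ^ #S : ℕ) : ℝ)) =o[atTop] fun N => ((2 ^ N : ℕ) : ℝ) := by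
    push_cast
    exact isLittleO_pow_const_const_pow_of_one_lt _ one_lt_two
  obtain ⟨N, ⟨hC, hS, hN₀N⟩, hbound⟩ := (((eventually_all_finset S).mpr
    fun p _ => eventually_ge_atTop (C p)).and ((eventually_gt_atTop #S).and
    (eventually_ge_atTop N₀))).and (eventually_mul_le_of_isLittleO hpoly (4 * ∏ p ∈ S, K p))
    |>.exists
  obtain ⟨n, hn, hsmall⟩ := exists_mem_Ico_forall_ordProj_le hKC hC hS
  rw [mem_Ico] at hn
  have hlower : 2 ^ n ≤ 2 * (f n).natAbs := hN₀ n (by omega)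
  have hfn : (f n).natAbs ≠ 0 := fun h => by simp [h] at hlower
  have hsupp : (f n).natAbs.primeFactors ⊆ S := fun q hq => hfin.mem_toFinset.mpr
    ⟨Nat.prime_of_mem_primeFactors hq, n, Int.natCast_dvd.mpr (Nat.dvd_of_mem_primeFactors hq)⟩
  have hupper : (f n).natAbs ≤ (∏ p ∈ S, K p) * N ^ #S := calc
    (f n).natAbs = ∏ p ∈ S, ordProj[p] (f n).natAbs :=
      Nat.eq_prod_ordProj_of_primeFactors_subset hfn hsupp
    _ ≤ ∏ p ∈ S, K p * N := prod_le_prod' hsmall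
    _ = (∏ p ∈ S, K p) * N ^ #S := by rw [prod_mul_distrib, prod_const]
  have := Nat.pow_le_pow_right two_pos hn.1
  have := Nat.one_le_two_pow (n := n)
  nlinarith

theorem primes_dividing_recurrence_infinite_general
    (a1 a2 b1 b2 : ℤ) (ha1 : a1 ≠ 0) (ha2 : a2 ≠ 0) (hb1 : b1 ≠ 0) (hb2 : b2 ≠ 0)
    (hne : a1 ≠ a2) (hne' : a1 ≠ -a2)
    (hcop_a : IsCoprime a1 a2) (hcop_b : IsCoprime b1 b2) :
    {p : ℕ | p.Prime ∧ ∃ n : ℕ, (p : ℤ) ∣ b2 * a1 ^ n - b1 * a2 ^ n}.Infinite := by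
  have habs : a1.natAbs ≠ a2.natAbs := by
    rw [Ne, Int.natAbs_eq_natAbs_iff]
    tauto
  exact infinite_setOf_prime_dvd_of_growth
    (eventually_two_pow_le_two_mul_natAbs ha1 ha2 hb1 hb2 habs)
    fun p hp => exists_pow_le_mul_of_pow_dvd_of_pow_dvd hb1 hb2 habs hcop_a hcop_b hp

/-- For coprime nonzero integers `a1 ≠ ±a2`, `b1, b2` with `a1/a2` and `b1/b2`
multiplicatively independent in `ℚ*`, infinitely many primes divide some term of
the sequence `x n = b2 * a1^n - b1 * a2^n`. -/
theorem primes_dividing_recurrence_infinite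
    (a1 a2 b1 b2 : ℤ) (ha1 : a1 ≠ 0) (ha2 : a2 ≠ 0) (hb1 : b1 ≠ 0) (hb2 : b2 ≠ 0)
    (hne : a1 ≠ a2) (hne' : a1 ≠ -a2)
    (hcop_a : IsCoprime a1 a2) (hcop_b : IsCoprime b1 b2)
    (hindep : ∀ x y : ℤ,
      ((a1 : ℚ) / a2) ^ x * ((b1 : ℚ) / b2) ^ y = 1 → x = 0 ∧ y = 0) :
    {p : ℕ | p.Prime ∧ ∃ n : ℕ, (p : ℤ) ∣ b2 * a1 ^ n - b1 * a2 ^ n}.Infinite :=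
  primes_dividing_recurrence_infinite_general a1 a2 b1 b2 ha1 ha2 hb1 hb2 hne hne' hcop_a hcop_b
end

section
/- Let S be a finite set of primes, let a1, a2, b1, b2 be nonzero integers with gcd(a1,a2)=1, and set x_n = b2*a1^n - b1*a2^n with x_0 ≠ 0. Let ℓ = φ(|x_0| * ∏_{p ∈ S} p), where φ is Euler's totient. If p ∈ S does not divide a1*a2, then for all n ≥ 0, the p-adic valuation of x_{ℓn} equals the p-adic valuation of x_0. -/
private lemma euler_dvd_aux {m : ℕ} {a : ℤ} (hc : IsCoprime a (m : ℤ)) {l : ℕ}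
    (hd : m.totient ∣ l) : (m : ℤ) ∣ a ^ l - 1 := by
  obtain ⟨k, rfl⟩ := hd
  have hu : IsUnit (a : ZMod m) := by
    have h2 := hc.map (Int.castRingHom (ZMod m))
    simp only [eq_intCast, Int.cast_natCast, ZMod.natCast_self, isCoprime_zero_right] at h2
    exact h2
  obtain ⟨u, hu⟩ := hu
  have h1 : (a : ZMod m) ^ m.totient = 1 := by
    rw [← hu, ← Units.val_pow_eq_pow_val, ZMod.pow_totient, Units.val_one]
  have h0 : ((a ^ (m.totient * k) - 1 : ℤ) : ZMod m) = 0 := by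
    push_cast
    rw [pow_mul, h1, one_pow, sub_self]
  exact (ZMod.intCast_zmod_eq_zero_iff_dvd _ m).mp h0

/-- Pólya's argument: with `ℓ = φ(|x₀| * ∏_{p ∈ S} p)`, for any prime `p ∈ S`
not dividing `a1 * a2`, the `p`-adic valuation of `x (ℓ * n)` equals that of `x 0`,
where `x n = b2 * a1^n - b1 * a2^n`. -/
theorem valuation_periodic_in_recurrence
    (S : Finset ℕ) (hS : ∀ p ∈ S, p.Prime)
    (a1 a2 b1 b2 : ℤ) (ha1 : a1 ≠ 0) (ha2 : a2 ≠ 0) (hb1 : b1 ≠ 0) (hb2 : b2 ≠ 0)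
    (hcop : IsCoprime a1 a2)
    (x : ℕ → ℤ) (hx : ∀ n, x n = b2 * a1 ^ n - b1 * a2 ^ n)
    (hx0 : x 0 ≠ 0)
    (ℓ : ℕ) (hℓ : ℓ = Nat.totient ((x 0).natAbs * ∏ p ∈ S, p))
    (p : ℕ) (hp : p ∈ S) (hpa : ¬ (p : ℤ) ∣ a1 * a2) :
    ∀ n : ℕ, padicValInt p (x (ℓ * n)) = padicValInt p (x 0) := by
  intro n
  have hpp : p.Prime := hS p hp
  haveI : Fact p.Prime := ⟨hpp⟩
  set e := padicValInt p (x 0) with he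
  have hpa1 : ¬ (p : ℤ) ∣ a1 := fun h => hpa (h.mul_right a2)
  have hpa2 : ¬ (p : ℤ) ∣ a2 := fun h => hpa (h.mul_left a1)
  have hpz : Prime (p : ℤ) := Nat.prime_iff_prime_int.mp hpp
  -- p^(e+1) divides |x0| * ∏ p
  have hdvd1 : p ^ (e + 1) ∣ (x 0).natAbs * ∏ q ∈ S, q := by
    rw [pow_succ]
    refine mul_dvd_mul ?_ (Finset.dvd_prod_of_mem _ hp)
    rw [he, padicValInt]
    exact pow_padicValNat_dvd
  have hld : (p ^ (e + 1)).totient ∣ ℓ * n :=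
    ((hℓ ▸ Nat.totient_dvd_of_dvd hdvd1).trans (dvd_mul_right ℓ n))
  have key : ∀ a : ℤ, ¬ (p : ℤ) ∣ a → (p : ℤ) ^ (e + 1) ∣ a ^ (ℓ * n) - 1 := by
    intro a ha
    have hc : IsCoprime a ((p ^ (e + 1) : ℕ) : ℤ) := by
      push_cast
      exact ((hpz.coprime_iff_not_dvd.mpr ha).symm).pow_right
    have := euler_dvd_aux hc hld
    push_cast at this
    exact this
  have hdiff : (p : ℤ) ^ (e + 1) ∣ x (ℓ * n) - x 0 := by
    have hrw : x (ℓ * n) - x 0 = b2 * (a1 ^ (ℓ * n) - 1) - b1 * (a2 ^ (ℓ * n) - 1) := by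
      rw [hx, hx]; ring
    rw [hrw]
    exact dvd_sub ((key a1 hpa1).mul_left b2) ((key a2 hpa2).mul_left b1)
  have hnd : ¬ (p : ℤ) ^ (e + 1) ∣ x 0 := by
    rw [padicValInt_dvd_iff]
    push_neg
    exact ⟨hx0, by omega⟩
  have hxn0 : x (ℓ * n) ≠ 0 := by
    intro h
    apply hnd
    rw [h, zero_sub, dvd_neg] at hdiff
    exact hdiff
  have hdvd_e : (p : ℤ) ^ e ∣ x (ℓ * n) := by
    have h1 : (p : ℤ) ^ e ∣ x (ℓ * n) - x 0 :=
      (pow_dvd_pow _ (Nat.le_succ e)).trans hdiff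
    have h2 : (p : ℤ) ^ e ∣ x 0 := padicValInt_dvd _
    simpa using dvd_add h1 h2
  have hnot_e1 : ¬ (p : ℤ) ^ (e + 1) ∣ x (ℓ * n) := by
    intro h
    apply hnd
    simpa using dvd_sub h hdiff
  have h1 : e ≤ padicValInt p (x (ℓ * n)) :=
    ((padicValInt_dvd_iff _ _).mp hdvd_e).resolve_left hxn0
  have h2 : padicValInt p (x (ℓ * n)) ≤ e := by
    by_contra hlt
    exact hnot_e1 ((padicValInt_dvd_iff _ _).mpr (Or.inr (by omega)))
  omega
end

section
/- The double series ∑_{i=1}^∞ ∑_{j=1}^∞ μ(j) / (i^2 * j * φ(ij)) converges to ∏_{p prime} (1 - p/(p^3 - 1)). -/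
/-!
Grouping the absolutely convergent double series by `n = i j` turns it into `∑ₙ c(n)` with
`c(n) = (∑_{d ∣ n} μ(d) d) / (n² φ(n))`. This `c` is multiplicative with `c(p^e) = -p^(1-3e)` for
`e ≥ 1`, so its Euler factor at `p` is `1 - p/(p³ - 1)`. Absolute convergence rests on
`n ≤ 2 φ(n)²`, which makes `∑ 1/(j φ(j))` converge.
-/

open ArithmeticFunction
open scoped ArithmeticFunction.Moebius ArithmeticFunction.zeta

namespace Nat

theorem prime_pow_le_gcd_two_mul_totient_sq {p k : ℕ} (hp : p.Prime) (hk : 0 < k) :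
    p ^ k ≤ gcd 2 (p ^ k) * φ (p ^ k) ^ 2 := by
  obtain ⟨j, rfl⟩ : ∃ j, k = j + 1 := ⟨k - 1, by omega⟩
  rw [totient_prime_pow_succ hp]
  rcases hp.eq_two_or_odd with rfl | hodd
  · rw [gcd_eq_left (dvd_pow_self 2 j.succ_ne_zero), show 2 - 1 = 1 from rfl, mul_one, pow_succ']
    exact Nat.mul_le_mul_left 2 (le_self_pow two_ne_zero _)
  · have hp3 : 3 ≤ p := by have := hp.two_le; omega
    have hsq : p ≤ (p - 1) ^ 2 := by
      obtain ⟨q, rfl⟩ : ∃ q, p = q + 3 := ⟨p - 3, by omega⟩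
      rw [show q + 3 - 1 = q + 2 by omega]
      nlinarith
    calc p ^ (j + 1) = p ^ j * p := pow_succ p j
      _ ≤ p ^ j * p ^ j * (p - 1) ^ 2 :=
        Nat.mul_le_mul (le_mul_of_one_le_right' (one_le_pow _ _ hp.pos)) hsq
      _ = 1 * (p ^ j * (p - 1)) ^ 2 := by ring
      _ ≤ gcd 2 (p ^ (j + 1)) * (p ^ j * (p - 1)) ^ 2 :=
        Nat.mul_le_mul_right _ (gcd_pos_of_pos_left _ two_pos)

/-- The factor `gcd 2 n` makes both sides multiplicative; it is needed because `φ 2 = 1`. -/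
theorem le_gcd_two_mul_totient_sq (n : ℕ) : n ≤ gcd 2 n * φ n ^ 2 := by
  induction n using recOnPosPrimePosCoprime with
  | prime_pow p k hp hk => exact prime_pow_le_gcd_two_mul_totient_sq hp hk
  | zero => simp
  | one => simp
  | coprime a b _ _ hab ha hb =>
    rw [totient_mul hab, Coprime.gcd_mul 2 hab]
    calc a * b ≤ (gcd 2 a * φ a ^ 2) * (gcd 2 b * φ b ^ 2) := Nat.mul_le_mul ha hb
      _ = gcd 2 a * gcd 2 b * (φ a * φ b) ^ 2 := by ring

theorem le_two_mul_totient_sq (n : ℕ) : n ≤ 2 * φ n ^ 2 :=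
  (le_gcd_two_mul_totient_sq n).trans (Nat.mul_le_mul_right _ (gcd_le_left n two_pos))

end Nat

theorem summable_inv_mul_totient : Summable fun n : ℕ => ((n : ℝ) * n.totient)⁻¹ := by
  refine ((Real.summable_nat_rpow_inv.2 (by norm_num : (1 : ℝ) < 3 / 2)).mul_left
    √2).of_nonneg_of_le (fun n => by positivity) fun n => ?_
  rcases n.eq_zero_or_pos with rfl | hn
  · simp
  have hbound : ((n : ℝ) ^ (3 / 2 : ℝ)) ^ 2 ≤ (√2 * (n * n.totient)) ^ 2 := by
    rw [← Real.rpow_natCast, ← Real.rpow_mul n.cast_nonneg, mul_pow, Real.sq_sqrt zero_le_two,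
      show (3 / 2 : ℝ) * (2 : ℕ) = (3 : ℕ) by norm_num, Real.rpow_natCast]
    exact_mod_cast (by nlinarith [Nat.le_two_mul_totient_sq n] : n ^ 3 ≤ 2 * (n * n.totient) ^ 2)
  have hpos : (0 : ℝ) < n * n.totient := by positivity
  rw [← div_eq_mul_inv, le_div_iff₀ (by positivity), inv_mul_le_iff₀ hpos, mul_comm]
  exact (pow_le_pow_iff_left₀ (by positivity) (by positivity) two_ne_zero).1 hbound

namespace ArithmeticFunction

def totient : ArithmeticFunction ℕ := ⟨Nat.totient, Nat.totient_zero⟩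

@[simp]
theorem totient_apply (n : ℕ) : totient n = Nat.totient n := rfl

theorem isMultiplicative_totient : IsMultiplicative totient :=
  ⟨Nat.totient_one, Nat.totient_mul⟩

theorem sum_divisors_prime_pow_succ_moebius_mul_self {R : Type*} [CommRing R] {p : ℕ}
    (hp : p.Prime) (k : ℕ) : ∑ d ∈ (p ^ (k + 1)).divisors, (μ d : R) * d = 1 - p := by
  rw [Nat.sum_divisors_prime_pow hp, Finset.sum_range_succ', Finset.sum_range_succ']
  have hvanish : ∀ i ∈ Finset.range k, (μ (p ^ (i + 1 + 1)) : R) * ↑(p ^ (i + 1 + 1)) = 0 := by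
    intro i _
    simp [moebius_apply_prime_pow hp]
  rw [Finset.sum_eq_zero hvanish]
  simp [moebius_apply_prime hp]
  ring

end ArithmeticFunction

theorem HasSum.sum_divisorsAntidiagonal {α : Type*} [AddCommMonoid α] [TopologicalSpace α]
    [ContinuousAdd α] [RegularSpace α] {f : ℕ × ℕ → α} {a : α}
    (h : HasSum (fun p : ℕ+ × ℕ+ => f (p.1, p.2)) a) :
    HasSum (fun n : ℕ+ => ∑ x ∈ (n : ℕ).divisorsAntidiagonal, f x) a :=
  (sigmaAntidiagonalEquivProd.hasSum_iff.2 h).sigma fun n => by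
    rw [← Finset.sum_coe_sort]
    exact hasSum_fintype _

noncomputable def stephensTerm (i j : ℕ) : ℝ :=
  μ j / (i ^ 2 * j * Nat.totient (i * j))

/-- The sum of the terms `stephensTerm i j` with `i * j = n`. -/
noncomputable def stephensCoeff : ArithmeticFunction ℝ :=
  pdiv (ζ * pmul (μ : ArithmeticFunction ℝ) (ArithmeticFunction.id : ArithmeticFunction ℝ))
    (pmul (pow 2 : ArithmeticFunction ℝ) (totient : ArithmeticFunction ℝ))

theorem isMultiplicative_stephensCoeff : IsMultiplicative stephensCoeff :=
  (isMultiplicative_zeta.natCast.mul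
    (isMultiplicative_moebius.intCast.pmul isMultiplicative_id.natCast)).pdiv
    (isMultiplicative_pow.natCast.pmul isMultiplicative_totient.natCast)

theorem stephensCoeff_apply (n : ℕ) :
    stephensCoeff n = (∑ d ∈ n.divisors, (μ d : ℝ) * d) / ((n : ℝ) ^ 2 * Nat.totient n) := by
  simp only [stephensCoeff, pdiv_apply, coe_zeta_mul_apply, pmul_apply]
  simp [pow_apply]

theorem stephensCoeff_eq_sum (n : ℕ) :
    stephensCoeff n = ∑ x ∈ n.divisorsAntidiagonal, stephensTerm x.1 x.2 := by
  rw [stephensCoeff_apply]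
  rcases eq_or_ne n 0 with rfl | hn
  · simp
  rw [Nat.sum_divisorsAntidiagonal' stephensTerm, Finset.sum_div]
  refine Finset.sum_congr rfl fun d hd => ?_
  have hdn : n / d * d = n := Nat.div_mul_cancel (Nat.dvd_of_mem_divisors hd)
  have hd₀ : (d : ℝ) ≠ 0 := by exact_mod_cast (Nat.pos_of_mem_divisors hd).ne'
  have hnd : ((n / d : ℕ) : ℝ) ≠ 0 := by
    exact_mod_cast fun h => hn (by rw [← hdn, h, zero_mul])
  have hφ : (Nat.totient n : ℝ) ≠ 0 := by simpa using hn
  have hcast : (n : ℝ) = (n / d : ℕ) * d := by exact_mod_cast hdn.symm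
  rw [stephensTerm, hdn, hcast]
  field_simp

theorem stephensCoeff_prime_pow_succ {p : ℕ} (hp : p.Prime) (k : ℕ) :
    stephensCoeff (p ^ (k + 1)) = -p / ((p : ℝ) ^ 3) ^ (k + 1) := by
  have hp0 : (p : ℝ) ≠ 0 := by exact_mod_cast hp.ne_zero
  have hp1 : (p : ℝ) - 1 ≠ 0 := sub_ne_zero.2 (by exact_mod_cast hp.one_lt.ne')
  rw [stephensCoeff_apply, sum_divisors_prime_pow_succ_moebius_mul_self hp,
    Nat.totient_prime_pow_succ hp, Nat.cast_mul, Nat.cast_sub hp.one_le]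
  push_cast
  field_simp
  ring

theorem hasSum_stephensCoeff_prime_pow {p : ℕ} (hp : p.Prime) :
    HasSum (fun e => stephensCoeff (p ^ e)) (1 - p / ((p : ℝ) ^ 3 - 1)) := by
  have hp0 : (p : ℝ) ≠ 0 := by exact_mod_cast hp.ne_zero
  have hp3 : (1 : ℝ) < (p : ℝ) ^ 3 := one_lt_pow₀ (by exact_mod_cast hp.one_lt) three_ne_zero
  have hp3' : (p : ℝ) ^ 3 - 1 ≠ 0 := sub_ne_zero.2 hp3.ne'
  have hterm (k : ℕ) : stephensCoeff (p ^ (k + 1)) = -p / (p : ℝ) ^ 3 * ((p : ℝ) ^ 3)⁻¹ ^ k := by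
    rw [stephensCoeff_prime_pow_succ hp, pow_succ, inv_pow]
    field_simp
  have hsum : -p / (p : ℝ) ^ 3 * (1 - ((p : ℝ) ^ 3)⁻¹)⁻¹ = -p / ((p : ℝ) ^ 3 - 1) := by
    field_simp
  have htail : HasSum (fun k => stephensCoeff (p ^ (k + 1))) (-p / ((p : ℝ) ^ 3 - 1)) := by
    have hgeo := (hasSum_geometric_of_lt_one (by positivity)
      (inv_lt_one_of_one_lt₀ hp3)).mul_left (-p / (p : ℝ) ^ 3)
    rw [hsum] at hgeo
    simpa only [hterm] using hgeo
  have := (hasSum_nat_add_iff (f := fun e => stephensCoeff (p ^ e)) 1).mp htail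
  rw [Finset.sum_range_one, pow_zero, isMultiplicative_stephensCoeff.map_one] at this
  rwa [neg_div, neg_add_eq_sub] at this

theorem abs_stephensTerm_le (i j : ℕ) :
    |stephensTerm i j| ≤ ((i : ℝ) ^ 2)⁻¹ * ((j : ℝ) * j.totient)⁻¹ := by
  rcases i.eq_zero_or_pos with rfl | hi
  · simp [stephensTerm]
  rcases j.eq_zero_or_pos with rfl | hj
  · simp [stephensTerm]
  have hφ₀ : 0 < (i * j).totient := Nat.totient_pos.2 (by positivity)
  have hφ : j.totient ≤ (i * j).totient :=
    Nat.le_of_dvd hφ₀ (Nat.totient_dvd_of_dvd (dvd_mul_left j i))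
  have hD : (0 : ℝ) < i ^ 2 * j * (i * j).totient :=
    mul_pos (by positivity) (by exact_mod_cast hφ₀)
  rw [stephensTerm, abs_div, abs_of_pos hD, ← mul_inv, ← mul_assoc, ← one_div]
  gcongr
  exact_mod_cast abs_moebius_le_one

theorem summable_norm_stephensTerm : Summable fun p : ℕ+ × ℕ+ => ‖stephensTerm p.1 p.2‖ := by
  have hmajor : Summable fun p : ℕ × ℕ => ((p.1 : ℝ) ^ 2)⁻¹ * ((p.2 : ℝ) * p.2.totient)⁻¹ :=
    (Real.summable_nat_pow_inv.2 one_lt_two).mul_of_nonneg summable_inv_mul_totient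
      (fun _ => by positivity) (fun _ => by positivity)
  have hnat : Summable fun p : ℕ × ℕ => ‖stephensTerm p.1 p.2‖ :=
    hmajor.of_nonneg_of_le (fun _ => norm_nonneg _) fun p => abs_stephensTerm_le p.1 p.2
  exact hnat.comp_injective (i := Prod.map PNat.val PNat.val)
    (Prod.map_injective.2 ⟨PNat.coe_injective, PNat.coe_injective⟩)

theorem summable_norm_stephensCoeff : Summable fun n => ‖stephensCoeff n‖ := by
  rw [← summable_pnat_iff_summable_nat]
  refine (summable_norm_stephensTerm.hasSum.sum_divisorsAntidiagonal
    (f := fun x => ‖stephensTerm x.1 x.2‖)).summable.of_nonneg_of_le (fun _ => norm_nonneg _)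
    fun n => ?_
  rw [stephensCoeff_eq_sum]
  exact norm_sum_le _ _

theorem hasSum_stephensCoeff :
    HasSum stephensCoeff (∑' p : ℕ+ × ℕ+, stephensTerm p.1 p.2) := by
  have h := summable_norm_stephensTerm.of_norm.hasSum.sum_divisorsAntidiagonal
    (f := fun x => stephensTerm x.1 x.2)
  simp only [← stephensCoeff_eq_sum] at h
  rwa [hasSum_pnat_iff, ArithmeticFunction.map_zero, add_zero] at h

/-- The double series `∑_{i,j ≥ 1} μ(j)/(i² j φ(ij))` converges to the
universal constant `S = ∏_p (1 - p/(p³-1))`. -/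
theorem double_sum_eq_stephens_constant :
    HasSum
      (fun p : ℕ+ × ℕ+ =>
        (μ (p.2 : ℕ) : ℝ) /
          ((p.1 : ℕ) ^ 2 * (p.2 : ℕ) * (Nat.totient ((p.1 : ℕ) * (p.2 : ℕ))) : ℝ))
      (∏' q : Nat.Primes, (1 - (q : ℕ) / (((q : ℕ) : ℝ) ^ 3 - 1))) := by
  have hEuler := isMultiplicative_stephensCoeff.eulerProduct_hasProd summable_norm_stephensCoeff
  have hlocal : (fun p : Nat.Primes => ∑' e, stephensCoeff ((p : ℕ) ^ e)) =
      fun p : Nat.Primes => 1 - (p : ℕ) / (((p : ℕ) : ℝ) ^ 3 - 1) :=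
    funext fun p => (hasSum_stephensCoeff_prime_pow p.prop).tsum_eq
  rw [hlocal] at hEuler
  rw [hEuler.tprod_eq, hasSum_stephensCoeff.tsum_eq]
  exact summable_norm_stephensTerm.of_norm.hasSum
end

section
/- Let f be the multiplicative arithmetic function determined (for fixed positive integers m, n) by f(p^k) = -p^{1-3k} for primes p not dividing mn, f(p^k) = p^{-3k} for p | n, and f(p^k) = -(p-1) * p^{-3k} for p | m with p ∤ n (k ≥ 1). Then ∑_{d=1}^∞ f(d) converges absolutely and equals ∏_{p ∤ mn} (p^3 - p - 1)/(p^3 - 1) * ∏_{p | n} p^3/(p^3 - 1) * ∏_{p | m, p ∤ n} (p^3 - p)/(p^3 - 1). -/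
/-!
On prime powers `f (p ^ k) = c_p * p ^ (-3k)` with `|c_p| ≤ p`, so `|f (p ^ k)| ≤ p ^ (-2k)`, hence
`|f d| ≤ d ^ (-2)` by multiplicativity and the series converges absolutely. Its Euler factor at `p`
is then the geometric sum `1 + c_p / (p ^ 3 - 1)`. The factors at the finitely many primes dividing
`mn` split off as finite products; what remains is the Euler product of `f` restricted to integers
coprime to `mn`, which is how the infinite product in the statement is seen to converge.
-/

namespace ArithmeticFunction

variable {R : Type*}

def ofFun [Zero R] (f : ℕ → R) : ArithmeticFunction R :=
  ⟨fun d => if d = 0 then 0 else f d, if_pos rfl⟩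

theorem ofFun_apply_of_ne_zero [Zero R] {f : ℕ → R} {d : ℕ} (hd : d ≠ 0) : ofFun f d = f d :=
  if_neg hd

theorem isMultiplicative_ofFun [MonoidWithZero R] {f : ℕ → R} (h1 : f 1 = 1)
    (hmul : ∀ a b : ℕ, a.Coprime b → f (a * b) = f a * f b) : (ofFun f).IsMultiplicative := by
  refine IsMultiplicative.iff_ne_zero.mpr ⟨?_, fun {a b} ha hb hab => ?_⟩
  · rw [ofFun_apply_of_ne_zero one_ne_zero, h1]
  · rw [ofFun_apply_of_ne_zero (mul_ne_zero ha hb), ofFun_apply_of_ne_zero ha,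
      ofFun_apply_of_ne_zero hb, hmul a b hab]

def restrictCoprime [Zero R] (g : ArithmeticFunction R) (N : ℕ) : ArithmeticFunction R :=
  ⟨fun d => if d.Coprime N then g d else 0, by simp⟩

theorem restrictCoprime_apply [Zero R] (g : ArithmeticFunction R) (N d : ℕ) :
    g.restrictCoprime N d = if d.Coprime N then g d else 0 :=
  rfl

theorem IsMultiplicative.restrictCoprime [MonoidWithZero R] {g : ArithmeticFunction R}
    (hg : g.IsMultiplicative) (N : ℕ) : (g.restrictCoprime N).IsMultiplicative := by
  refine ⟨by simp [restrictCoprime_apply, hg.map_one], fun {a b} hab => ?_⟩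
  simp only [restrictCoprime_apply, Nat.coprime_mul_iff_left, hg.map_mul_of_coprime hab]
  split_ifs <;> simp_all

theorem norm_restrictCoprime_le [SeminormedAddGroup R] (g : ArithmeticFunction R) (N d : ℕ) :
    ‖g.restrictCoprime N d‖ ≤ ‖g d‖ := by
  rw [restrictCoprime_apply]
  split_ifs <;> simp

theorem IsMultiplicative.tsum_restrictCoprime_prime_pow [Semiring R] [TopologicalSpace R]
    {g : ArithmeticFunction R} (hg : g.IsMultiplicative) (N : ℕ) {p : ℕ} (hp : p.Prime) :
    ∑' e, g.restrictCoprime N (p ^ e) = if p ∣ N then 1 else ∑' e, g (p ^ e) := by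
  simp only [restrictCoprime_apply]
  split_ifs with hpN
  · rw [tsum_eq_single 0 fun e he => if_neg ?_]
    · simp [hg.map_one]
    · rw [Nat.coprime_pow_left_iff (Nat.pos_of_ne_zero he), hp.coprime_iff_not_dvd]
      exact not_not_intro hpN
  · exact tsum_congr fun e => if_pos ((hp.coprime_iff_not_dvd.mpr hpN).pow_left e)

theorem IsMultiplicative.hasProd_restrictCoprime [NormedCommRing R] [CompleteSpace R]
    {g : ArithmeticFunction R} (hg : g.IsMultiplicative) (hsum : Summable (‖g ·‖)) (N : ℕ) :
    HasProd (fun p : Nat.Primes => if (p : ℕ) ∣ N then 1 else ∑' e, g (p ^ e))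
      (∑' d, g.restrictCoprime N d) :=
  ((hg.restrictCoprime N).eulerProduct_hasProd
    (hsum.of_nonneg_of_le (fun _ => norm_nonneg _) (norm_restrictCoprime_le g N))).congr_fun
    fun p => (hg.tsum_restrictCoprime_prime_pow N p.2).symm

theorem IsMultiplicative.norm_le_inv_pow [NormedRing R] [NormOneClass R]
    {g : ArithmeticFunction R} (hg : g.IsMultiplicative) (s : ℕ)
    (hpow : ∀ p k : ℕ, p.Prime → 0 < k → ‖g (p ^ k)‖ ≤ (((p ^ k : ℕ) : ℝ) ^ s)⁻¹) (d : ℕ) :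
    ‖g d‖ ≤ ((d : ℝ) ^ s)⁻¹ := by
  induction d using Nat.recOnPosPrimePosCoprime with
  | prime_pow p k hp hk => exact hpow p k hp hk
  | zero => simp only [map_zero, norm_zero]; positivity
  | one => simp [hg.map_one]
  | coprime a b _ _ hab iha ihb =>
    calc ‖g (a * b)‖ = ‖g a * g b‖ := by rw [hg.map_mul_of_coprime hab]
      _ ≤ ‖g a‖ * ‖g b‖ := norm_mul_le _ _
      _ ≤ ((a : ℝ) ^ s)⁻¹ * ((b : ℝ) ^ s)⁻¹ := mul_le_mul iha ihb (norm_nonneg _) (by positivity)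
      _ = (((a * b : ℕ) : ℝ) ^ s)⁻¹ := by push_cast; rw [mul_pow, mul_inv]

theorem IsMultiplicative.summable_norm_of_prime_pow_le [NormedRing R] [NormOneClass R]
    {g : ArithmeticFunction R} (hg : g.IsMultiplicative) {s : ℕ} (hs : 1 < s)
    (hpow : ∀ p k : ℕ, p.Prime → 0 < k → ‖g (p ^ k)‖ ≤ (((p ^ k : ℕ) : ℝ) ^ s)⁻¹) :
    Summable (‖g ·‖) :=
  (Real.summable_nat_pow_inv.mpr hs).of_nonneg_of_le (fun _ => norm_nonneg _)
    (hg.norm_le_inv_pow s hpow)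

end ArithmeticFunction

open ArithmeticFunction

theorem hasSum_one_add_of_eq_mul_geometric {K : Type*} [NormedField K] {a : ℕ → K} {c r : K}
    (hr : ‖r‖ < 1) (h0 : a 0 = 1) (hpos : ∀ k, 0 < k → a k = c * r ^ k) :
    HasSum a (1 + c * r / (1 - r)) := by
  have hgeom : HasSum (fun k => c * r ^ k + if k = 0 then 1 - c else 0) (c * (1 - r)⁻¹ + (1 - c)) :=
    ((hasSum_geometric_of_norm_lt_one hr).mul_left c).add (hasSum_ite_eq 0 (1 - c))
  have hr1 : 1 - r ≠ 0 := sub_ne_zero.mpr fun h => by simp [← h] at hr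
  convert hgeom using 1
  · funext k
    rcases k.eq_zero_or_pos with rfl | hk
    · simp [h0]
    · simp [hpos k hk, hk.ne']
  · field_simp
    ring

theorem hasProd_primes_ite {M : Type*} [CommMonoid M] [TopologicalSpace M] {s : Finset ℕ}
    (hs : ∀ p ∈ s, p.Prime) (F : ℕ → M) :
    HasProd (fun p : Nat.Primes => if (p : ℕ) ∈ s then F p else 1) (∏ p ∈ s, F p) := by
  have hG : HasProd (fun q => if q ∈ s then F q else 1) (∏ p ∈ s, F p) := by
    have h := hasProd_prod_of_ne_finset_one (L := SummationFilter.unconditional ℕ) (s := s)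
      (f := fun q => if q ∈ s then F q else 1) fun q hq => if_neg hq
    rwa [Finset.prod_ite_mem, Finset.inter_self] at h
  have hinj : Function.Injective ((↑) : Nat.Primes → ℕ) := Subtype.coe_injective
  exact (hinj.hasProd_iff fun q hq => if_neg fun hqs => hq ⟨⟨q, hs q hqs⟩, rfl⟩).mpr hG

theorem natCast_cube_sub_one_pos {p : ℕ} (hp : 2 ≤ p) : 0 < (p : ℝ) ^ 3 - 1 := by
  have hp' : (1 : ℝ) < p := by exact_mod_cast hp
  linarith [one_lt_pow₀ hp' three_ne_zero]

def primePowCoeff (m n p : ℕ) : ℝ := if p ∣ n then 1 else if p ∣ m then 1 - p else -p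

theorem apply_prime_pow_eq_primePowCoeff_mul {m n : ℕ} {f : ℕ → ℝ}
    (hf_nmid : ∀ p k : ℕ, p.Prime → 1 ≤ k → ¬ p ∣ m * n →
      f (p ^ k) = -(p : ℝ) ^ ((1 : ℤ) - 3 * k))
    (hf_n : ∀ p k : ℕ, p.Prime → 1 ≤ k → p ∣ n →
      f (p ^ k) = (p : ℝ) ^ (-(3 : ℤ) * k))
    (hf_m : ∀ p k : ℕ, p.Prime → 1 ≤ k → p ∣ m → ¬ p ∣ n →
      f (p ^ k) = -((p : ℝ) - 1) * (p : ℝ) ^ (-(3 : ℤ) * k))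
    {p k : ℕ} (hp : p.Prime) (hk : 1 ≤ k) :
    f (p ^ k) = primePowCoeff m n p * ((p : ℝ) ^ 3)⁻¹ ^ k := by
  have hp0 : (p : ℝ) ≠ 0 := Nat.cast_ne_zero.mpr hp.ne_zero
  have h3k : (p : ℝ) ^ (-(3 : ℤ) * k) = ((p : ℝ) ^ 3)⁻¹ ^ k := by
    rw [zpow_mul, zpow_neg, zpow_ofNat, zpow_natCast]
  unfold primePowCoeff
  split_ifs with hn hm
  · rw [hf_n p k hp hk hn, h3k, one_mul]
  · rw [hf_m p k hp hk hm hn, h3k, neg_sub]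
  · rw [hf_nmid p k hp hk (by rw [hp.dvd_mul]; tauto), sub_eq_add_neg, zpow_add₀ hp0, zpow_one,
      ← neg_mul, ← h3k]
    ring_nf

theorem abs_primePowCoeff_le (m n : ℕ) {p : ℕ} (hp : 1 ≤ p) : |primePowCoeff m n p| ≤ p := by
  have hp' : (1 : ℝ) ≤ p := by exact_mod_cast hp
  unfold primePowCoeff
  split_ifs <;> rw [abs_le] <;> constructor <;> linarith

theorem abs_mul_inv_cube_pow_le {c : ℝ} {p k : ℕ} (hp : 1 ≤ p) (hc : |c| ≤ p) (hk : 0 < k) :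
    |c * ((p : ℝ) ^ 3)⁻¹ ^ k| ≤ (((p ^ k : ℕ) : ℝ) ^ 2)⁻¹ := by
  have hp' : (1 : ℝ) ≤ p := by exact_mod_cast hp
  have hp0 : (0 : ℝ) < p := by linarith
  rw [abs_mul, abs_of_nonneg (a := ((p : ℝ) ^ 3)⁻¹ ^ k) (by positivity)]
  calc |c| * ((p : ℝ) ^ 3)⁻¹ ^ k ≤ (p : ℝ) ^ k * ((p : ℝ) ^ 3)⁻¹ ^ k := by
        gcongr
        exact hc.trans (le_self_pow₀ hp' hk.ne')
    _ = (((p ^ k : ℕ) : ℝ) ^ 2)⁻¹ := by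
        rw [← mul_pow, show (p : ℝ) * ((p : ℝ) ^ 3)⁻¹ = ((p : ℝ) ^ 2)⁻¹ by field_simp]
        push_cast
        rw [inv_pow, ← pow_mul, ← pow_mul, mul_comm]

theorem hasSum_of_eq_mul_inv_cube_pow {a : ℕ → ℝ} {c : ℝ} {p : ℕ} (hp : 2 ≤ p)
    (h0 : a 0 = 1) (hpos : ∀ k, 0 < k → a k = c * ((p : ℝ) ^ 3)⁻¹ ^ k) :
    HasSum a (1 + c / ((p : ℝ) ^ 3 - 1)) := by
  have hcube := natCast_cube_sub_one_pos hp
  have hr : ‖((p : ℝ) ^ 3)⁻¹‖ < 1 := by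
    rw [norm_inv, Real.norm_of_nonneg (by positivity)]
    exact inv_lt_one_of_one_lt₀ (by linarith)
  have hsimp : c * ((p : ℝ) ^ 3)⁻¹ / (1 - ((p : ℝ) ^ 3)⁻¹) = c / ((p : ℝ) ^ 3 - 1) := by
    have := hcube.ne'
    field_simp
  simpa only [hsimp] using hasSum_one_add_of_eq_mul_geometric hr h0 hpos

theorem one_add_primePowCoeff_div_of_not_dvd {m n p : ℕ} (hp : p.Prime) (hpmn : ¬ p ∣ m * n) :
    1 + primePowCoeff m n p / ((p : ℝ) ^ 3 - 1) = ((p : ℝ) ^ 3 - p - 1) / ((p : ℝ) ^ 3 - 1) := by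
  have hne := (natCast_cube_sub_one_pos hp.two_le).ne'
  rw [hp.dvd_mul, not_or] at hpmn
  rw [primePowCoeff, if_neg hpmn.2, if_neg hpmn.1]
  field_simp
  ring

theorem one_add_primePowCoeff_div_eq_mul {m n p : ℕ} (hm : m ≠ 0) (hn : n ≠ 0) (hp : p.Prime) :
    1 + primePowCoeff m n p / ((p : ℝ) ^ 3 - 1) =
      (if p ∣ m * n then 1 else ((p : ℝ) ^ 3 - p - 1) / ((p : ℝ) ^ 3 - 1)) *
      (if p ∈ n.primeFactors then (p : ℝ) ^ 3 / ((p : ℝ) ^ 3 - 1) else 1) *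
      (if p ∈ m.primeFactors \ n.primeFactors then ((p : ℝ) ^ 3 - p) / ((p : ℝ) ^ 3 - 1)
        else 1) := by
  have hne := (natCast_cube_sub_one_pos hp.two_le).ne'
  simp only [Nat.mem_primeFactors_of_ne_zero hn, Nat.mem_primeFactors_of_ne_zero hm,
    Finset.mem_sdiff, hp, true_and, primePowCoeff, hp.dvd_mul]
  split_ifs <;> first | tauto | (field_simp; ring)

/-- The Euler product evaluation of `∑ f(d)` for the multiplicative function `f`
defined on prime powers by `f(p^k) = -p^{1-3k}` for `p ∤ mn`, `f(p^k) = p^{-3k}`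
for `p ∣ n`, and `f(p^k) = -(p-1) p^{-3k}` for `p ∣ m`, `p ∤ n`. -/
theorem euler_product_of_multiplicative_f
    (m n : ℕ) (hm : 0 < m) (hn : 0 < n)
    (f : ℕ → ℝ) (hf1 : f 1 = 1)
    (hfmul : ∀ a b : ℕ, Nat.Coprime a b → f (a * b) = f a * f b)
    (hf_nmid : ∀ p k : ℕ, p.Prime → 1 ≤ k → ¬ p ∣ m * n →
      f (p ^ k) = -(p : ℝ) ^ ((1 : ℤ) - 3 * k))
    (hf_n : ∀ p k : ℕ, p.Prime → 1 ≤ k → p ∣ n →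
      f (p ^ k) = (p : ℝ) ^ (-(3 : ℤ) * k))
    (hf_m : ∀ p k : ℕ, p.Prime → 1 ≤ k → p ∣ m → ¬ p ∣ n →
      f (p ^ k) = -((p : ℝ) - 1) * (p : ℝ) ^ (-(3 : ℤ) * k)) :
    Summable (fun d : ℕ+ => |f d|) ∧
    HasSum (fun d : ℕ+ => f d)
      ((∏' p : Nat.Primes,
          (if (p : ℕ) ∣ m * n then 1
            else (((p : ℕ) : ℝ) ^ 3 - (p : ℕ) - 1) / (((p : ℕ) : ℝ) ^ 3 - 1)))
        * (∏ p ∈ n.primeFactors, ((p : ℝ) ^ 3 / ((p : ℝ) ^ 3 - 1)))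
        * ∏ p ∈ m.primeFactors \ n.primeFactors,
            (((p : ℝ) ^ 3 - p) / ((p : ℝ) ^ 3 - 1))) := by
  set g := ofFun f
  have hg : g.IsMultiplicative := isMultiplicative_ofFun hf1 hfmul
  have hg_pow (p k : ℕ) (hp : p.Prime) (hk : 0 < k) :
      g (p ^ k) = primePowCoeff m n p * ((p : ℝ) ^ 3)⁻¹ ^ k :=
    (ofFun_apply_of_ne_zero (pow_ne_zero k hp.ne_zero)).trans
      (apply_prime_pow_eq_primePowCoeff_mul hf_nmid hf_n hf_m hp hk)
  have hsum : Summable (‖g ·‖) := hg.summable_norm_of_prime_pow_le one_lt_two fun p k hp hk => by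
    rw [hg_pow p k hp hk, Real.norm_eq_abs]
    exact abs_mul_inv_cube_pow_le hp.one_le (abs_primePowCoeff_le m n hp.one_le) hk
  have hlocal (p : ℕ) (hp : p.Prime) :
      ∑' e, g (p ^ e) = 1 + primePowCoeff m n p / ((p : ℝ) ^ 3 - 1) :=
    (hasSum_of_eq_mul_inv_cube_pow hp.two_le (by simp [hg.map_one]) (hg_pow p · hp)).tsum_eq
  have hA : HasProd (fun p : Nat.Primes => if (p : ℕ) ∣ m * n then 1
      else (((p : ℕ) : ℝ) ^ 3 - (p : ℕ) - 1) / (((p : ℕ) : ℝ) ^ 3 - 1))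
      (∑' d, g.restrictCoprime (m * n) d) := by
    refine (hg.hasProd_restrictCoprime hsum (m * n)).congr_fun fun p => ?_
    rw [hlocal p p.2]
    split_ifs with hpmn
    exacts [rfl, (one_add_primePowCoeff_div_of_not_dvd p.2 hpmn).symm]
  have hB := hasProd_primes_ite (s := n.primeFactors) (fun _ => Nat.prime_of_mem_primeFactors)
    fun p : ℕ => (p : ℝ) ^ 3 / ((p : ℝ) ^ 3 - 1)
  have hC := hasProd_primes_ite (s := m.primeFactors \ n.primeFactors)
    (fun _ hp => Nat.prime_of_mem_primeFactors (Finset.mem_sdiff.mp hp).1)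
    fun p : ℕ => ((p : ℝ) ^ 3 - p) / ((p : ℝ) ^ 3 - 1)
  have hprod := (hA.mul hB).mul hC
  rw [← hA.tprod_eq] at hprod
  have hval := (hg.eulerProduct_hasProd hsum).unique <| hprod.congr_fun fun p => by
    rw [hlocal p p.2, one_add_primePowCoeff_div_eq_mul hm.ne' hn.ne' p.2]
  have hfg (d : ℕ+) : f d = g d := (ofFun_apply_of_ne_zero d.ne_zero).symm
  refine ⟨(summable_pnat_iff_summable_nat.mpr hsum).congr fun d => ?_, ?_⟩
  · rw [hfg, Real.norm_eq_abs]
  · refine (hasSum_pnat_iff.mpr ?_).congr_fun hfg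
    rw [ArithmeticFunction.map_zero, add_zero, ← hval]
    exact hsum.of_norm.hasSum
end

section
/- For every positive integer k, the kernel of the natural map Q*/(Q*)^k → Q(ζ_k)*/(Q(ζ_k)*)^k induced by the inclusion Q ⊆ Q(ζ_k) is an abelian group annihilated by 2; in particular, if k is odd this kernel is trivial. -/
/-!
Let `K = ℚ(ζ)`, an abelian extension of `ℚ`, and let `y ∈ K` with `y ^ k = x ∈ ℚ`. For every
automorphism `σ`, `σ y / y` is a `k`-th root of unity. If `ρ` acts on the `k`-th roots of unity
by `ω ↦ ω ^ n`, then, as `ρ` commutes with every `σ`, the element `ρ y / y ^ n` is fixed by the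
whole Galois group, hence rational, and its `k`-th power is `x ^ (1 - n)`. Complex conjugation
(`n = -1`) gives `x ^ 2`; when `k` is odd, `n = 2` is a unit mod `k` and gives `x⁻¹`.
-/

open scoped IsMulCommutative

variable {F K : Type*} [Field F] [Field K] [Algebra F K]

theorem exists_algebraMap_eq_algEquiv_div_zpow [IsAbelianGalois F K] {k : ℕ} [NeZero k]
    {ζ : K} (hζ : IsPrimitiveRoot ζ k) {ρ : K ≃ₐ[F] K} {n : ℤ} (hρ : ρ ζ = ζ ^ n)
    {x : F} {y : K} (hy : y ≠ 0) (hyx : y ^ k = algebraMap F K x) :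
    ∃ z : F, algebraMap F K z = ρ y / y ^ n := by
  rw [← Set.mem_range, InfiniteGalois.mem_range_algebraMap_iff_fixed]
  intro σ
  obtain ⟨i, -, hi⟩ : ∃ i < k, ζ ^ i = σ y / y := by
    refine hζ.eq_pow_of_pow_eq_one ?_
    rw [div_pow, ← map_pow, hyx, AlgEquiv.commutes, ← hyx, div_self (pow_ne_zero k hy)]
  have hσy : σ y = ζ ^ i * y := by rw [hi, div_mul_cancel₀ _ hy]
  have hσρ : σ (ρ y) = ρ (σ y) := by rw [← AlgEquiv.mul_apply, mul_comm, AlgEquiv.mul_apply]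
  rw [map_div₀, hσρ, map_zpow₀, hσy, map_mul, map_pow, hρ, mul_zpow, ← zpow_natCast,
    ← zpow_natCast, ← zpow_mul, ← zpow_mul, mul_comm n, mul_div_mul_left]
  exact zpow_ne_zero _ (hζ.ne_zero (NeZero.ne k))

theorem exists_pow_eq_zpow_one_sub [IsAbelianGalois F K] {k : ℕ} [NeZero k]
    {ζ : K} (hζ : IsPrimitiveRoot ζ k) {ρ : K ≃ₐ[F] K} {n : ℤ} (hρ : ρ ζ = ζ ^ n)
    {x : F} {y : K} (hy : y ≠ 0) (hyx : y ^ k = algebraMap F K x) :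
    ∃ z : F, z ≠ 0 ∧ z ^ k = x ^ (1 - n) := by
  obtain ⟨z, hz⟩ := exists_algebraMap_eq_algEquiv_div_zpow hζ hρ hy hyx
  have hx : x ≠ 0 := by
    rintro rfl
    exact pow_ne_zero k hy (by simpa using hyx)
  refine ⟨z, ?_, (algebraMap F K).injective ?_⟩
  · rintro rfl
    exact div_ne_zero (by simpa) (zpow_ne_zero n hy) (by simpa using hz.symm)
  · rw [map_pow, hz, div_pow, ← map_pow, ← zpow_natCast (y ^ n), zpow_comm, zpow_natCast, hyx,
      AlgEquiv.commutes, zpow_sub₀ hx, zpow_one, map_div₀, map_zpow₀]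

theorem IsCyclotomicExtension.Rat.exists_algEquiv_apply_eq_zpow [Algebra ℚ K] {k : ℕ}
    [NeZero k] [IsCyclotomicExtension {k} ℚ K] {ζ : K} (hζ : IsPrimitiveRoot ζ k) {n : ℤ}
    (hn : IsCoprime n k) : ∃ ρ : K ≃ₐ[ℚ] K, ρ ζ = ζ ^ n := by
  have hirr := Polynomial.cyclotomic.irreducible_rat (Nat.pos_of_neZero k)
  let ρ := (autEquivPow K hirr).symm (ZMod.unitOfIsCoprime n hn)
  have hρ : (zeta_spec k ℚ K).autToPow ℚ ρ = ZMod.unitOfIsCoprime n hn :=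
    (autEquivPow K hirr).apply_symm_apply _
  obtain ⟨a, -, rfl⟩ := (zeta_spec k ℚ K).eq_pow_of_pow_eq_one hζ.pow_eq_one
  refine ⟨ρ, ?_⟩
  rw [map_pow, ← (zeta_spec k ℚ K).autToPow_spec ℚ, hρ, ZMod.coe_unitOfIsCoprime, pow_right_comm,
    ← zpow_natCast, ZMod.val_intCast]
  conv_rhs => rw [← Int.emod_add_mul_ediv n k, zpow_add₀ (hζ.ne_zero (NeZero.ne k)), zpow_mul,
    hζ.zpow_eq_one, one_zpow, mul_one]

theorem IsPrimitiveRoot.isCyclotomicExtension_intermediateFieldAdjoin {L : Type*} [Field L]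
    [Algebra F L] {n : ℕ} [NeZero n] {ζ : L} (hζ : IsPrimitiveRoot ζ n) :
    IsCyclotomicExtension {n} F (IntermediateField.adjoin F {ζ}) := by
  change IsCyclotomicExtension {n} F (IntermediateField.adjoin F {ζ}).toSubalgebra
  rw [IntermediateField.adjoin_simple_toSubalgebra_of_isAlgebraic
    ((hζ.isIntegral (NeZero.pos n)).tower_top.isAlgebraic)]
  exact hζ.adjoin_isCyclotomicExtension F

theorem exists_pow_eq_zpow_one_sub_of_mem_adjoin {L : Type*} [Field L] [CharZero L] {k : ℕ}
    [NeZero k] {ζ : L} (hζ : IsPrimitiveRoot ζ k) {n : ℤ} (hn : IsCoprime n k) {x : ℚ}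
    (hx : x ≠ 0) {y : L} (hy : y ∈ IntermediateField.adjoin ℚ {ζ}) (hyx : y ^ k = x) :
    ∃ z : ℚ, z ≠ 0 ∧ z ^ k = x ^ (1 - n) := by
  let K := IntermediateField.adjoin ℚ {ζ}
  -- `K` carries both its intermediate-field `ℚ`-algebra structure and `DivisionRing.toRatAlgebra`.
  have : IsCyclotomicExtension {k} ℚ K := by
    convert hζ.isCyclotomicExtension_intermediateFieldAdjoin (F := ℚ)
    · rfl
    · exact Subsingleton.elim _ _
  have := IsCyclotomicExtension.isAbelianGalois {k} ℚ K
  have hζK := IsCyclotomicExtension.zeta_spec k ℚ K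
  obtain ⟨ρ, hρ⟩ := IsCyclotomicExtension.Rat.exists_algEquiv_apply_eq_zpow hζK hn
  have hy0 : y ≠ 0 := ne_zero_pow (NeZero.ne k) (by rw [hyx]; exact_mod_cast hx)
  refine exists_pow_eq_zpow_one_sub hζK hρ (y := ⟨y, hy⟩) ?_ (Subtype.ext ?_)
  · exact fun h => hy0 (congrArg Subtype.val h)
  · simpa [eq_ratCast] using hyx

/-- The kernel of `ℚ*/(ℚ*)^k → ℚ(ζ_k)*/(ℚ(ζ_k)*)^k` is annihilated by 2:
if a nonzero rational `x` becomes a `k`-th power in `ℚ(ζ_k)`, then `x²` is a `k`-th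
power in `ℚ*`; and if `k` is odd, `x` itself is a `k`-th power in `ℚ*`. -/
theorem kernel_annihilated_by_two
    (k : ℕ) (hk : 0 < k) (ζ : ℂ) (hζ : IsPrimitiveRoot ζ k) :
    (∀ x : ℚ, x ≠ 0 →
      (∃ y : ℂ, y ∈ IntermediateField.adjoin ℚ ({ζ} : Set ℂ) ∧ y ^ k = (x : ℂ)) →
      ∃ z : ℚ, z ≠ 0 ∧ z ^ k = x ^ 2) ∧
    (Odd k → ∀ x : ℚ, x ≠ 0 →
      (∃ y : ℂ, y ∈ IntermediateField.adjoin ℚ ({ζ} : Set ℂ) ∧ y ^ k = (x : ℂ)) →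
      ∃ z : ℚ, z ≠ 0 ∧ z ^ k = x) := by
  have : NeZero k := ⟨hk.ne'⟩
  refine ⟨fun x hx ⟨y, hy, hyx⟩ => ?_, fun hodd x hx ⟨y, hy, hyx⟩ => ?_⟩
  · have hn : IsCoprime (-1 : ℤ) k := isCoprime_one_left.neg_left
    simpa [one_add_one_eq_two] using exists_pow_eq_zpow_one_sub_of_mem_adjoin hζ hn hx hy hyx
  · have hn : IsCoprime (2 : ℤ) k := by
      exact_mod_cast Nat.isCoprime_iff_coprime.mpr (Nat.coprime_two_left.mpr hodd)
    obtain ⟨z, hz0, hz⟩ := exists_pow_eq_zpow_one_sub_of_mem_adjoin hζ hn hx hy hyx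
    exact ⟨z⁻¹, inv_ne_zero hz0, by rw [inv_pow, hz]; norm_num⟩
end

section
/- If V ⊆ T are subgroups of an abelian group with T/V finite and k is a positive integer such that V/V^k and T/T^k are finite of the same cardinality, then the kernel of the natural map V/V^k → T/T^k has cardinality equal to the index [T : V*T^k], which divides [T : V]. -/
/-!
For a homomorphism `f : A →* B` of groups of the same finite order, `|ker f| · |im f| = |A| = |B| =
|im f| · [B : im f]`, so `|ker f| = [B : im f]`. For the natural map `V/V^k → T/T^k` the image is the
image of `V` in `T/T^k`, whose index is `[T : V T^k]`.
-/

namespace QuotientGroup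

theorem range_map {G H : Type*} [Group G] [Group H] (M : Subgroup G) [M.Normal]
    (N : Subgroup H) [N.Normal] (φ : G →* H) (h : M ≤ N.comap φ) :
    (map M N φ h).range = φ.range.map (mk' N) := by
  rw [← MonoidHom.range_comp]
  change _ = ((map M N φ h).comp (mk' M)).range
  rw [MonoidHom.range_comp, (mk' M).range_eq_top_of_surjective (mk'_surjective M),
    ← MonoidHom.range_eq_map]

theorem index_range_map {G H : Type*} [Group G] [Group H] (M : Subgroup G) [M.Normal]
    (N : Subgroup H) [N.Normal] (φ : G →* H) (h : M ≤ N.comap φ) :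
    (map M N φ h).range.index = (φ.range ⊔ N).index := by
  rw [range_map, Subgroup.index_map, ker_mk', (mk' N).range_eq_top_of_surjective
    (mk'_surjective N), Subgroup.index_top, mul_one]

end QuotientGroup

theorem MonoidHom.card_ker_eq_index_range {A B : Type*} [Group A] [Group B] [Finite B]
    (f : A →* B) (hcard : Nat.card A = Nat.card B) : Nat.card f.ker = f.range.index := by
  refine Nat.eq_of_mul_eq_mul_right (Nat.card_pos (α := f.range)) ?_
  calc Nat.card f.ker * Nat.card f.range
      = Nat.card f.ker * f.ker.index := by rw [Subgroup.index_ker]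
    _ = Nat.card B := by rw [f.ker.card_mul_index, hcard]
    _ = f.range.index * Nat.card f.range := by rw [← f.range.card_mul_index, mul_comm]

theorem Subgroup.map_powMonoidHom_le {G : Type*} [CommGroup G] (T : Subgroup G) (k : ℕ) :
    T.map (powMonoidHom k) ≤ T :=
  Subgroup.map_le_iff_le_comap.2 fun _ ht => T.pow_mem ht k

theorem kernel_card_eq_index_general
    {G : Type*} [CommGroup G] (V T : Subgroup G) (hVT : V ≤ T)
    (k : ℕ)
    (h : (powMonoidHom k : ↥V →* ↥V).range ≤
      ((powMonoidHom k : ↥T →* ↥T).range).comap (Subgroup.inclusion hVT))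
    (hTfin : Finite (↥T ⧸ (powMonoidHom k : ↥T →* ↥T).range))
    (hcard : Nat.card (↥V ⧸ (powMonoidHom k : ↥V →* ↥V).range)
      = Nat.card (↥T ⧸ (powMonoidHom k : ↥T →* ↥T).range)) :
    Nat.card (MonoidHom.ker
        (QuotientGroup.map (powMonoidHom k : ↥V →* ↥V).range
          (powMonoidHom k : ↥T →* ↥T).range (Subgroup.inclusion hVT) h))
      = (V ⊔ T.map (powMonoidHom k)).relIndex T ∧
    (V ⊔ T.map (powMonoidHom k)).relIndex T ∣ V.relIndex T := by
  refine ⟨?_, Subgroup.relIndex_dvd_of_le_left T le_sup_left⟩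
  rw [MonoidHom.card_ker_eq_index_range _ hcard, QuotientGroup.index_range_map,
    Subgroup.inclusion_range, Subgroup.relIndex, Subgroup.subgroupOf_sup hVT
    (T.map_powMonoidHom_le k), Subgroup.subgroupOf_map_powMonoidHom_eq_range]

/-- If `V ≤ T` are subgroups of an abelian group with `T/V` finite, and `V/V^k`,
`T/T^k` are finite of the same cardinality, then the kernel of the natural map
`V/V^k → T/T^k` has cardinality `[T : V·T^k]`, which divides `[T : V]`. -/
theorem kernel_card_eq_index
    {G : Type*} [CommGroup G] (V T : Subgroup G) (hVT : V ≤ T)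
    (hfin : (V.relIndex T) ≠ 0)
    (k : ℕ) (hk : 0 < k)
    (h : (powMonoidHom k : ↥V →* ↥V).range ≤
      ((powMonoidHom k : ↥T →* ↥T).range).comap (Subgroup.inclusion hVT))
    (hVfin : Finite (↥V ⧸ (powMonoidHom k : ↥V →* ↥V).range))
    (hTfin : Finite (↥T ⧸ (powMonoidHom k : ↥T →* ↥T).range))
    (hcard : Nat.card (↥V ⧸ (powMonoidHom k : ↥V →* ↥V).range)
      = Nat.card (↥T ⧸ (powMonoidHom k : ↥T →* ↥T).range)) :
    Nat.card (MonoidHom.ker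
        (QuotientGroup.map (powMonoidHom k : ↥V →* ↥V).range
          (powMonoidHom k : ↥T →* ↥T).range (Subgroup.inclusion hVT) h))
      = (V ⊔ T.map (powMonoidHom k)).relIndex T ∧
    (V ⊔ T.map (powMonoidHom k)).relIndex T ∣ V.relIndex T :=
  kernel_card_eq_index_general V T hVT k h hTfin hcard
end

section
/- Let r, s ∈ Q and let (x_n) be an integer sequence with x_{k+2} = r*x_{k+1} - s*x_k for all k ≥ 0. Suppose X^2 - rX + s has a double rational root a1 (i.e., r^2 = 4s) and (x_n) does not satisfy any first-order recursion x_{k+1} = c*x_k. Then every prime not dividing the (numerator and denominator of the) coefficient b2 in the representation x_n = (b1 + b2*n)*a1^n divides some term x_n; in particular the set of primes dividing some term of the sequence has natural density 1. -/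
/-!
Write `b₂ = u / w` in lowest terms and `yₙ = x₀ w + u n ∈ ℤ`, so that `xₙ w = yₙ aⁿ`
(note `b₁ = x₀`). If `p ∤ u w` and `p` divided no `xₙ`, taking `p`-adic norms would give
`|yₙ|ₚ |a|ₚⁿ = 1` for all `n`. Since `y_p ≡ y₀ = x₀ w ≢ 0 (mod p)`, this forces `|a|ₚ = 1`,
hence `p ∤ yₙ` for every `n`; but `n ↦ yₙ` is an arithmetic progression whose difference `u`
is a unit mod `p`, so it meets every residue class, including `0`.
-/

lemma exists_nat_dvd_add_mul {p : ℕ} [Fact p.Prime] {a b : ℤ} (hb : ¬ (p : ℤ) ∣ b) :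
    ∃ n : ℕ, (p : ℤ) ∣ a + b * n := by
  have hb' : (b : ZMod p) ≠ 0 := by rwa [Ne, ZMod.intCast_zmod_eq_zero_iff_dvd]
  refine ⟨(-a / b : ZMod p).val, (ZMod.intCast_zmod_eq_zero_iff_dvd _ p).mp ?_⟩
  push_cast
  rw [ZMod.natCast_zmod_val]
  field_simp
  ring

lemma Rat.finite_setOf_dvd_num_or_den {q : ℚ} (hq : q ≠ 0) :
    {p : ℕ | (p : ℤ) ∣ q.num ∨ (p : ℤ) ∣ q.den}.Finite := by
  refine (Set.Finite.union (Nat.divisors q.num.natAbs).finite_toSet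
    (Nat.divisors q.den).finite_toSet).subset ?_
  rintro p (h | h)
  · exact Or.inl (Nat.mem_divisors.mpr ⟨Int.natCast_dvd.mp h, by simpa using hq⟩)
  · exact Or.inr (Nat.mem_divisors.mpr ⟨Int.natCast_dvd_natCast.mp h, q.den_nz⟩)

theorem exists_dvd_term_of_eq_linear_mul_pow {x : ℕ → ℤ} {a b₁ b₂ : ℚ}
    (hx : ∀ n : ℕ, (x n : ℚ) = (b₁ + b₂ * n) * a ^ n) {p : ℕ} (hp : p.Prime)
    (hnum : ¬ (p : ℤ) ∣ b₂.num) (hden : ¬ (p : ℤ) ∣ b₂.den) :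
    ∃ n : ℕ, (p : ℤ) ∣ x n := by
  have := Fact.mk hp
  by_contra! hndvd
  set y : ℕ → ℤ := fun n => x 0 * b₂.den + b₂.num * n with hy
  have hxy : ∀ n, (x n : ℚ) * b₂.den = y n * a ^ n := by
    intro n
    have h0 := hx 0
    simp only [Nat.cast_zero, mul_zero, add_zero, pow_zero, mul_one] at h0
    simp only [hy]
    push_cast
    rw [hx n, ← b₂.mul_den_eq_num, h0]
    ring
  have hw : padicNorm p b₂.den = 1 := (padicNorm.nat_eq_one_iff _).mpr (by exact_mod_cast hden)
  have hnorm : ∀ n, padicNorm p (y n) * padicNorm p a ^ n = 1 := by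
    intro n
    have h := congrArg (padicNorm p) (hxy n)
    rwa [padicNorm.mul, padicNorm.mul, IsAbsoluteValue.abv_pow (padicNorm p), hw,
      (padicNorm.int_eq_one_iff (x n)).mpr (hndvd n), mul_one, eq_comm] at h
  have hy_p : ¬ (p : ℤ) ∣ y p := by
    have hpZ : Prime (p : ℤ) := Nat.prime_iff_prime_int.mp hp
    intro h
    have h0 : (p : ℤ) ∣ x 0 * b₂.den := (dvd_add_left (dvd_mul_left _ _)).mp h
    exact (hpZ.dvd_or_dvd h0).elim (hndvd 0) hden
  have ha : padicNorm p a = 1 := by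
    have h := hnorm p
    rw [(padicNorm.int_eq_one_iff _).mpr hy_p, one_mul] at h
    exact (pow_eq_one_iff_of_nonneg (padicNorm.nonneg a) hp.ne_zero).mp h
  obtain ⟨n, hn⟩ := exists_nat_dvd_add_mul (a := x 0 * b₂.den) hnum
  have h := hnorm n
  rw [ha, one_pow, mul_one, padicNorm.int_eq_one_iff] at h
  exact h hn

theorem inseparable_case_density_one_general
    (x : ℕ → ℤ)
    (hnofirst : ¬ ∃ c : ℚ, ∀ k : ℕ, ((x (k + 1) : ℚ)) = c * x k)
    (a1 b1 b2 : ℚ)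
    (hrep : ∀ n : ℕ, ((x n : ℚ)) = (b1 + b2 * n) * a1 ^ n) :
    (∀ p : ℕ, p.Prime → ¬ (p : ℤ) ∣ b2.num → ¬ (p : ℤ) ∣ (b2.den : ℤ) →
      ∃ n : ℕ, (p : ℤ) ∣ x n) ∧
    {p : ℕ | p.Prime ∧ ¬ ∃ n : ℕ, (p : ℤ) ∣ x n}.Finite := by
  have hb2 : b2 ≠ 0 := by
    rintro rfl
    exact hnofirst ⟨a1, fun k => by rw [hrep, hrep]; push_cast; ring⟩
  have hdvd : ∀ p : ℕ, p.Prime → ¬ (p : ℤ) ∣ b2.num → ¬ (p : ℤ) ∣ (b2.den : ℤ) →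
      ∃ n : ℕ, (p : ℤ) ∣ x n :=
    fun p hp => exists_dvd_term_of_eq_linear_mul_pow hrep hp
  refine ⟨hdvd, (Rat.finite_setOf_dvd_num_or_den hb2).subset ?_⟩
  rintro p ⟨hp, hnot⟩
  by_contra h
  exact hnot (hdvd p hp (fun h' => h (Or.inl h')) (fun h' => h (Or.inr h')))

/-- Inseparable case of Theorem 4: if `X² - rX + s` has a double rational root `a1`
and the integer sequence `x` satisfies the recursion but no first-order recursion,
so that `x n = (b1 + b2 n) a1^n` with `b2 ≠ 0`, then every prime not dividing the
numerator or denominator of `b2` divides some term; in particular all but finitely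
many primes divide some term. -/
theorem inseparable_case_density_one
    (r s : ℚ) (x : ℕ → ℤ)
    (hrec : ∀ k : ℕ, ((x (k + 2) : ℚ)) = r * x (k + 1) - s * x k)
    (hdouble : r ^ 2 = 4 * s)
    (hnofirst : ¬ ∃ c : ℚ, ∀ k : ℕ, ((x (k + 1) : ℚ)) = c * x k)
    (a1 b1 b2 : ℚ) (ha1 : a1 = r / 2)
    (hrep : ∀ n : ℕ, ((x n : ℚ)) = (b1 + b2 * n) * a1 ^ n) :
    (∀ p : ℕ, p.Prime → ¬ (p : ℤ) ∣ b2.num → ¬ (p : ℤ) ∣ (b2.den : ℤ) →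
      ∃ n : ℕ, (p : ℤ) ∣ x n) ∧
    {p : ℕ | p.Prime ∧ ¬ ∃ n : ℕ, (p : ℤ) ∣ x n}.Finite :=
  inseparable_case_density_one_general x hnofirst a1 b1 b2 hrep
end
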